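/- arXiv:1709.09057 — 9 statements merged into one kernel-verified Lean document; each statement's English description precedes it below -/
import Mathlib

section
/- Let φ : 𝔻 → 𝔻 be holomorphic with φ(a) = b for points a, b ∈ 𝔻, and let s ∈ (0,1). Then the distance from φ(s𝔻) to the complement of 𝔻 satisfies dist(φ(s𝔻), 𝔻ᶜ) ≥ (1−s)·dist(a,𝔻ᶜ)·dist(b,𝔻ᶜ)/4. -/
open Metric Complex Set

noncomputable def moeb (a z : ℂ) : ℂ := (z - a) / (1 - (starRingEnd ℂ) a * z)

lemma moeb_denom_ne {a z : ℂ} (ha : ‖a‖ < 1) (hz : ‖z‖ < 1) :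
    1 - (starRingEnd ℂ) a * z ≠ 0 := by
  intro h
  have h2 : (1:ℂ) = (starRingEnd ℂ) a * z := eq_of_sub_eq_zero h
  have h1 : ‖(starRingEnd ℂ) a * z‖ < 1 := by
    rw [norm_mul, RCLike.norm_conj]
    nlinarith [norm_nonneg a, norm_nonneg z]
  rw [← h2] at h1
  simp at h1

lemma moeb_normSq (a z : ℂ) :
    normSq (1 - (starRingEnd ℂ) a * z) - normSq (z - a)
      = (1 - normSq a) * (1 - normSq z) := by
  simp only [normSq_apply, Complex.sub_re, Complex.sub_im, Complex.mul_re, Complex.mul_im,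
    Complex.one_re, Complex.one_im, Complex.conj_re, Complex.conj_im]
  ring

lemma one_sub_normSq_moeb {a z : ℂ} (ha : ‖a‖ < 1) (hz : ‖z‖ < 1) :
    1 - normSq (moeb a z)
      = (1 - normSq a) * (1 - normSq z) / normSq (1 - (starRingEnd ℂ) a * z) := by
  have hd := moeb_denom_ne ha hz
  have hd' : normSq (1 - (starRingEnd ℂ) a * z) ≠ 0 := by
    simpa [normSq_eq_zero] using hd
  rw [moeb, normSq_div, ← moeb_normSq a z]
  rw [sub_div, div_self hd']

lemma norm_moeb_lt_one {a z : ℂ} (ha : ‖a‖ < 1) (hz : ‖z‖ < 1) : ‖moeb a z‖ < 1 := by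
  have h := one_sub_normSq_moeb ha hz
  have hd : normSq (1 - (starRingEnd ℂ) a * z) > 0 := by
    exact Complex.normSq_pos.mpr (moeb_denom_ne ha hz)
  have h1 : (0:ℝ) < 1 - normSq a := by
    have : normSq a = ‖a‖ ^ 2 := by rw [← Complex.sq_norm]
    nlinarith [norm_nonneg a]
  have h2 : (0:ℝ) < 1 - normSq z := by
    have : normSq z = ‖z‖ ^ 2 := by rw [← Complex.sq_norm]
    nlinarith [norm_nonneg z]
  have : 0 < 1 - normSq (moeb a z) := by rw [h]; positivity
  have hsq : normSq (moeb a z) = ‖moeb a z‖ ^ 2 := by rw [← Complex.sq_norm]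
  nlinarith [norm_nonneg (moeb a z)]

lemma moeb_inv {a z : ℂ} (ha : ‖a‖ < 1) (hz : ‖z‖ < 1) : moeb (-a) (moeb a z) = z := by
  have h1 := moeb_denom_ne ha hz
  have h2 : 1 - (starRingEnd ℂ) (-a) * moeb a z
      = (1 - (starRingEnd ℂ) a * a) / (1 - (starRingEnd ℂ) a * z) := by
    rw [moeb, map_neg, eq_div_iff h1]
    field_simp
    ring
  have h3 : 1 - (starRingEnd ℂ) a * a ≠ 0 := moeb_denom_ne ha ha
  have h4 : 1 - (starRingEnd ℂ) (-a) * moeb a z ≠ 0 := by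
    rw [h2]; exact div_ne_zero h3 h1
  simp only [moeb, map_neg] at h4 ⊢
  rw [div_eq_iff h4]
  have h1' : 1 - z * (starRingEnd ℂ) a ≠ 0 := by rwa [mul_comm]
  field_simp
  ring

lemma moeb_diffOn {a : ℂ} (ha : ‖a‖ < 1) :
    DifferentiableOn ℂ (moeb a) (ball (0:ℂ) 1) := by
  apply DifferentiableOn.div
  · fun_prop
  · fun_prop
  · intro z hz
    exact moeb_denom_ne ha (by simpa [mem_ball_zero_iff] using hz)

lemma schwarz_pick {φ : ℂ → ℂ} (hφ : DifferentiableOn ℂ φ (ball (0:ℂ) 1))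
    (hmaps : Set.MapsTo φ (ball (0:ℂ) 1) (ball (0:ℂ) 1))
    {a z : ℂ} (ha : ‖a‖ < 1) (hz : ‖z‖ < 1) :
    ‖moeb (φ a) (φ z)‖ ≤ ‖moeb a z‖ := by
  have ha' : a ∈ ball (0:ℂ) 1 := mem_ball_zero_iff.2 ha
  have hfa : ‖φ a‖ < 1 := mem_ball_zero_iff.1 (hmaps ha')
  have hna : ‖-a‖ < 1 := by simpa using ha
  have hmap1 : Set.MapsTo (moeb (-a)) (ball (0:ℂ) 1) (ball (0:ℂ) 1) := fun w hw =>
    mem_ball_zero_iff.2 (norm_moeb_lt_one hna (mem_ball_zero_iff.1 hw))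
  set ψ : ℂ → ℂ := fun w => moeb (φ a) (φ (moeb (-a) w)) with hψdef
  have hdψ : DifferentiableOn ℂ ψ (ball (0:ℂ) 1) :=
    (moeb_diffOn hfa).comp (hφ.comp (moeb_diffOn hna) hmap1) (hmaps.comp hmap1)
  have hmapψ : Set.MapsTo ψ (ball (0:ℂ) 1) (ball (0:ℂ) 1) := fun w hw =>
    mem_ball_zero_iff.2 (norm_moeb_lt_one hfa (mem_ball_zero_iff.1 (hmaps (hmap1 hw))))
  have hψ0 : ψ 0 = 0 := by
    have h0 : moeb (-a) 0 = a := by simp [moeb]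
    simp [hψdef, h0, moeb]
  have key := Complex.norm_le_norm_of_mapsTo_ball hdψ (hmapψ.mono_right ball_subset_closedBall) hψ0
    (z := moeb a z) (by simpa [Complex.norm_def] using norm_moeb_lt_one ha hz)
  have hinv : moeb (-a) (moeb a z) = z := moeb_inv ha hz
  simpa [hψdef, hinv] using key

lemma infDist_compl_unit_ball {x : ℂ} (hx : ‖x‖ < 1) :
    Metric.infDist x (ball (0:ℂ) 1)ᶜ = 1 - ‖x‖ := by
  have hne : ((ball (0:ℂ) 1)ᶜ : Set ℂ).Nonempty := ⟨2, by simp [mem_ball_zero_iff]⟩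
  apply le_antisymm
  · rcases eq_or_ne x 0 with rfl | hx0
    · simpa using Metric.infDist_le_dist_of_mem
        (x := (0:ℂ)) (y := 1) (s := (ball (0:ℂ) 1)ᶜ) (by simp [mem_ball_zero_iff])
    · have hpos : (0:ℝ) < ‖x‖ := norm_pos_iff.2 hx0
      have hy : ((‖x‖⁻¹ : ℝ) : ℂ) * x ∈ (ball (0:ℂ) 1)ᶜ := by
        simp only [Set.mem_compl_iff, mem_ball_zero_iff, norm_mul, Complex.norm_real,
          Real.norm_eq_abs, abs_of_pos (inv_pos.2 hpos), not_lt,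
          inv_mul_cancel₀ (show ‖x‖ ≠ 0 from hpos.ne'), le_refl]
      have := Metric.infDist_le_dist_of_mem (x := x) hy
      have hd : dist x (((‖x‖⁻¹ : ℝ) : ℂ) * x) = 1 - ‖x‖ := by
        rw [dist_eq_norm]
        have : x - ((‖x‖⁻¹ : ℝ) : ℂ) * x = ((1 - (‖x‖⁻¹ : ℝ) : ℝ) : ℂ) * x := by
          push_cast; ring
        rw [this, norm_mul, Complex.norm_real, Real.norm_eq_abs]
        have h1 : (1:ℝ) - ‖x‖⁻¹ ≤ 0 := by
          rw [sub_nonpos]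
          exact (one_le_inv₀ hpos).2 hx.le
        rw [abs_of_nonpos h1, neg_sub, sub_mul, inv_mul_cancel₀ hpos.ne', one_mul]
      linarith [this, hd ▸ this]
  · by_contra h
    push_neg at h
    obtain ⟨y, hy, hdy⟩ := (Metric.infDist_lt_iff hne).1 h
    have hy1 : 1 ≤ ‖y‖ := by
      by_contra h2; push_neg at h2; exact hy (mem_ball_zero_iff.2 h2)
    have : ‖y‖ ≤ ‖x‖ + dist x y := by
      rw [dist_eq_norm]
      calc ‖y‖ = ‖x + (y - x)‖ := by ring_nf
        _ ≤ ‖x‖ + ‖y - x‖ := norm_add_le _ _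
        _ = ‖x‖ + ‖x - y‖ := by rw [norm_sub_rev]
    linarith

set_option maxHeartbeats 1000000 in
/-- Schwarz–Pick consequence: for holomorphic `φ : 𝔻 → 𝔻` with `φ a = b` and `s ∈ (0,1)`,
every point of `φ(s𝔻)` is at distance at least `(1−s)·dist(a,𝔻ᶜ)·dist(b,𝔻ᶜ)/4` from `𝔻ᶜ`. -/
theorem stmt_0 (φ : ℂ → ℂ) (hφ : DifferentiableOn ℂ φ (Metric.ball (0:ℂ) 1))
    (hmaps : Set.MapsTo φ (Metric.ball (0:ℂ) 1) (Metric.ball (0:ℂ) 1))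
    (a b : ℂ) (ha : a ∈ Metric.ball (0:ℂ) 1) (hb : b ∈ Metric.ball (0:ℂ) 1)
    (hab : φ a = b) (s : ℝ) (hs : s ∈ Set.Ioo (0:ℝ) 1) :
    ∀ z ∈ Metric.ball (0:ℂ) s,
      (1 - s) * Metric.infDist a (Metric.ball (0:ℂ) 1)ᶜ *
          Metric.infDist b (Metric.ball (0:ℂ) 1)ᶜ / 4
        ≤ Metric.infDist (φ z) (Metric.ball (0:ℂ) 1)ᶜ := by
  intro z hz
  obtain ⟨hs0, hs1⟩ := hs
  have hna : ‖a‖ < 1 := mem_ball_zero_iff.1 ha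
  have hnb : ‖b‖ < 1 := mem_ball_zero_iff.1 hb
  have hzs : ‖z‖ < s := mem_ball_zero_iff.1 hz
  have hnz : ‖z‖ < 1 := hzs.trans hs1
  have hz1 : z ∈ Metric.ball (0:ℂ) 1 := mem_ball_zero_iff.2 hnz
  have hw : ‖φ z‖ < 1 := mem_ball_zero_iff.1 (hmaps hz1)
  rw [infDist_compl_unit_ball hna, infDist_compl_unit_ball hnb,
    infDist_compl_unit_ball hw]
  -- Schwarz–Pick
  have hsp : ‖moeb b (φ z)‖ ≤ ‖moeb a z‖ := by
    have := schwarz_pick hφ hmaps hna hnz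
    rwa [hab] at this
  set u : ℂ := moeb b (φ z) with hu
  set R : ℝ := ‖moeb a z‖ with hR
  have hR1 : R < 1 := norm_moeb_lt_one hna hnz
  have hU1 : ‖u‖ < 1 := norm_moeb_lt_one hnb hw
  have hA0 : (0:ℝ) ≤ ‖a‖ := norm_nonneg a
  have hB0 : (0:ℝ) ≤ ‖b‖ := norm_nonneg b
  have hZ0 : (0:ℝ) ≤ ‖z‖ := norm_nonneg z
  have hU0 : (0:ℝ) ≤ ‖u‖ := norm_nonneg u
  have hR0 : (0:ℝ) ≤ R := norm_nonneg _
  have hW0 : (0:ℝ) ≤ ‖φ z‖ := norm_nonneg _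
  -- key identities
  have e1 : 1 - normSq (moeb a z)
      = (1 - normSq a) * (1 - normSq z) / normSq (1 - (starRingEnd ℂ) a * z) :=
    one_sub_normSq_moeb hna hnz
  have hnegb : ‖-b‖ < 1 := by simpa using hnb
  have e2 : 1 - normSq (φ z)
      = (1 - normSq b) * (1 - normSq u) / normSq (1 - (starRingEnd ℂ) (-b) * u) := by
    have := one_sub_normSq_moeb hnegb hU1
    rwa [moeb_inv hnb hw, normSq_neg] at this
  set M1 : ℝ := normSq (1 - (starRingEnd ℂ) a * z) with hM1def
  set M2 : ℝ := normSq (1 - (starRingEnd ℂ) (-b) * u) with hM2def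
  have hM1pos : 0 < M1 := Complex.normSq_pos.mpr (moeb_denom_ne hna hnz)
  have hM2pos : 0 < M2 := Complex.normSq_pos.mpr (moeb_denom_ne hnegb hU1)
  -- denominator bounds
  have hM1le : M1 ≤ (1 + ‖a‖ * s) ^ 2 := by
    have h1 : ‖1 - (starRingEnd ℂ) a * z‖ ≤ 1 + ‖a‖ * ‖z‖ := by
      calc ‖1 - (starRingEnd ℂ) a * z‖ ≤ ‖(1:ℂ)‖ + ‖(starRingEnd ℂ) a * z‖ := norm_sub_le _ _
        _ = 1 + ‖a‖ * ‖z‖ := by rw [norm_one, norm_mul, RCLike.norm_conj]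
    have h2 : ‖1 - (starRingEnd ℂ) a * z‖ ≤ 1 + ‖a‖ * s := by
      have := mul_le_mul_of_nonneg_left hzs.le hA0
      linarith only [h1, this]
    have h3 : M1 = ‖1 - (starRingEnd ℂ) a * z‖ ^ 2 := by
      rw [hM1def, ← Complex.sq_norm]
    rw [h3]
    exact pow_le_pow_left₀ (norm_nonneg _) h2 2
  have hM2le : M2 ≤ (1 + ‖b‖) ^ 2 := by
    have h1 : ‖1 - (starRingEnd ℂ) (-b) * u‖ ≤ 1 + ‖b‖ * ‖u‖ := by
      calc ‖1 - (starRingEnd ℂ) (-b) * u‖ ≤ ‖(1:ℂ)‖ + ‖(starRingEnd ℂ) (-b) * u‖ :=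
            norm_sub_le _ _
        _ = 1 + ‖b‖ * ‖u‖ := by rw [norm_one, norm_mul, RCLike.norm_conj, norm_neg]
    have h2 : ‖1 - (starRingEnd ℂ) (-b) * u‖ ≤ 1 + ‖b‖ := by
      have := mul_le_mul_of_nonneg_left hU1.le hB0
      linarith only [h1, this]
    have h3 : M2 = ‖1 - (starRingEnd ℂ) (-b) * u‖ ^ 2 := by
      rw [hM2def, ← Complex.sq_norm]
    rw [h3]
    exact pow_le_pow_left₀ (norm_nonneg _) h2 2
  -- normSq to norm squared
  have nsa : normSq a = ‖a‖ ^ 2 := by rw [← Complex.sq_norm]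
  have nsb : normSq b = ‖b‖ ^ 2 := by rw [← Complex.sq_norm]
  have nsz : normSq z = ‖z‖ ^ 2 := by rw [← Complex.sq_norm]
  have nsu : normSq u = ‖u‖ ^ 2 := by rw [← Complex.sq_norm]
  have nsw : normSq (φ z) = ‖φ z‖ ^ 2 := by rw [← Complex.sq_norm]
  have nsm : normSq (moeb a z) = R ^ 2 := by rw [hR, ← Complex.sq_norm]
  have e1' : (1 - R ^ 2) * M1 = (1 - ‖a‖ ^ 2) * (1 - ‖z‖ ^ 2) := by
    have := e1
    rw [nsa, nsz, nsm, eq_div_iff hM1pos.ne'] at this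
    exact this
  have e2' : (1 - ‖φ z‖ ^ 2) * M2 = (1 - ‖b‖ ^ 2) * (1 - ‖u‖ ^ 2) := by
    have := e2
    rw [nsb, nsu, nsw, eq_div_iff hM2pos.ne'] at this
    exact this
  -- square bounds
  have hRsq : R ^ 2 ≤ 1 := pow_le_one₀ hR0 hR1.le
  have hWsq : ‖φ z‖ ^ 2 ≤ 1 := pow_le_one₀ hW0 hw.le
  have hAsq : ‖a‖ ^ 2 ≤ 1 := pow_le_one₀ hA0 hna.le
  have hBsq : ‖b‖ ^ 2 ≤ 1 := pow_le_one₀ hB0 hnb.le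
  have hUR : ‖u‖ ^ 2 ≤ R ^ 2 := pow_le_pow_left₀ hU0 hsp 2
  have hZs2 : ‖z‖ ^ 2 ≤ s ^ 2 := pow_le_pow_left₀ hZ0 hzs.le 2
  -- (1+as)^2 ≤ (1+a)(1+s)
  have hAs1 : ‖a‖ * s ≤ 1 := mul_le_one₀ hna.le hs0.le hs1.le
  have hq : (1 + ‖a‖ * s) ^ 2 ≤ (1 + ‖a‖) * (1 + s) := by
    have t1 : (0:ℝ) ≤ ‖a‖ * (1 - s) := mul_nonneg hA0 (by linarith)
    have t2 : (0:ℝ) ≤ s * (1 - ‖a‖) := mul_nonneg hs0.le (by linarith)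
    have t3 : (0:ℝ) ≤ (‖a‖ * s) * (1 - ‖a‖ * s) :=
      mul_nonneg (mul_nonneg hA0 hs0.le) (by linarith)
    have tid : (1 + ‖a‖) * (1 + s) - (1 + ‖a‖ * s) ^ 2
        = ‖a‖ * (1 - s) + s * (1 - ‖a‖) + (‖a‖ * s) * (1 - ‖a‖ * s) := by ring
    linarith only [t1, t2, t3, tid]
  -- step 1 : (1-s)(1-‖a‖) ≤ 1 - R^2
  have step1 : (1 - s) * (1 - ‖a‖) ≤ 1 - R ^ 2 := by
    have hq2 : M1 ≤ (1 + ‖a‖) * (1 + s) := hM1le.trans hq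
    have hsA : (0:ℝ) ≤ (1 - s) * (1 - ‖a‖) :=
      mul_nonneg (by linarith only [hs1]) (by linarith only [hna])
    have c2 : (1 - ‖a‖ ^ 2) * (1 - s ^ 2) ≤ (1 - ‖a‖ ^ 2) * (1 - ‖z‖ ^ 2) :=
      mul_le_mul_of_nonneg_left (by linarith only [hZs2]) (by linarith only [hAsq])
    have hmul : (1 - s) * (1 - ‖a‖) * M1 ≤ (1 - R ^ 2) * M1 := by
      calc (1 - s) * (1 - ‖a‖) * M1
          ≤ (1 - s) * (1 - ‖a‖) * ((1 + ‖a‖) * (1 + s)) :=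
            mul_le_mul_of_nonneg_left hq2 hsA
        _ = (1 - ‖a‖ ^ 2) * (1 - s ^ 2) := by ring
        _ ≤ (1 - ‖a‖ ^ 2) * (1 - ‖z‖ ^ 2) := c2
        _ = (1 - R ^ 2) * M1 := e1'.symm
    exact le_of_mul_le_mul_right hmul hM1pos
  -- step 2 : (1-‖b‖)(1-R^2) ≤ 4 (1 - ‖φ z‖)
  have step2 : (1 - ‖b‖) * (1 - R ^ 2) ≤ 4 * (1 - ‖φ z‖) := by
    have h1 : (1 - ‖b‖ ^ 2) * (1 - R ^ 2) ≤ (1 - ‖b‖ ^ 2) * (1 - ‖u‖ ^ 2) :=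
      mul_le_mul_of_nonneg_left (by linarith only [hUR]) (by linarith only [hBsq])
    have hM2le2 : M2 ≤ 2 * (1 + ‖b‖) := by
      have : (1 + ‖b‖) ^ 2 ≤ 2 * (1 + ‖b‖) := by
        have tid : 2 * (1 + ‖b‖) - (1 + ‖b‖) ^ 2 = (1 + ‖b‖) * (1 - ‖b‖) := by ring
        have := mul_nonneg (by linarith only [hB0] : (0:ℝ) ≤ 1 + ‖b‖)
          (by linarith only [hnb] : (0:ℝ) ≤ 1 - ‖b‖)
        linarith only [this, tid]
      linarith only [hM2le, this]
    have h2 : (1 - ‖φ z‖ ^ 2) * M2 ≤ (1 - ‖φ z‖ ^ 2) * (2 * (1 + ‖b‖)) :=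
      mul_le_mul_of_nonneg_left hM2le2 (by linarith only [hWsq])
    have h3 : (1 + ‖b‖) * ((1 - ‖b‖) * (1 - R ^ 2))
        ≤ (1 + ‖b‖) * (2 * (1 - ‖φ z‖ ^ 2)) := by
      calc (1 + ‖b‖) * ((1 - ‖b‖) * (1 - R ^ 2)) = (1 - ‖b‖ ^ 2) * (1 - R ^ 2) := by ring
        _ ≤ (1 - ‖b‖ ^ 2) * (1 - ‖u‖ ^ 2) := h1
        _ = (1 - ‖φ z‖ ^ 2) * M2 := e2'.symm
        _ ≤ (1 - ‖φ z‖ ^ 2) * (2 * (1 + ‖b‖)) := h2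
        _ = (1 + ‖b‖) * (2 * (1 - ‖φ z‖ ^ 2)) := by ring
    have h4 : (1 - ‖b‖) * (1 - R ^ 2) ≤ 2 * (1 - ‖φ z‖ ^ 2) :=
      le_of_mul_le_mul_left h3 (by linarith only [hB0])
    have h5 : 1 - ‖φ z‖ ^ 2 ≤ 2 * (1 - ‖φ z‖) := by
      have tid5 : 2 * (1 - ‖φ z‖) - (1 - ‖φ z‖ ^ 2) = (1 - ‖φ z‖) ^ 2 := by ring
      linarith only [tid5, sq_nonneg (1 - ‖φ z‖)]
    linarith only [h4, h5]
  have final1 : (1 - ‖b‖) * ((1 - s) * (1 - ‖a‖)) ≤ (1 - ‖b‖) * (1 - R ^ 2) :=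
    mul_le_mul_of_nonneg_left step1 (by linarith only [hnb])
  have final2 : (1 - s) * (1 - ‖a‖) * (1 - ‖b‖) ≤ 4 * (1 - ‖φ z‖) := by
    calc (1 - s) * (1 - ‖a‖) * (1 - ‖b‖) = (1 - ‖b‖) * ((1 - s) * (1 - ‖a‖)) := by ring
      _ ≤ (1 - ‖b‖) * (1 - R ^ 2) := final1
      _ ≤ 4 * (1 - ‖φ z‖) := step2
  linarith only [final2]
end

section
/- Let Ω ⊊ ℂⁿ be a convex domain (open, connected, nonempty, and not all of ℂⁿ). Then for all z, w ∈ Ω, the Kobayashi distance satisfies k_Ω(z,w) ≥ (1/2)·log(dist(w, Ωᶜ)/dist(z, Ωᶜ)). -/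
set_option maxHeartbeats 1000000

/-- The Poincaré distance on the unit disk (curvature −4 normalization),
`(1/2) log((1+ρ)/(1−ρ))` where `ρ` is the pseudo-hyperbolic distance. -/
noncomputable def poincareDist (a b : ℂ) : ℝ :=
  (1/2) * Real.log ((1 + ‖(a - b) / (1 - (starRingEnd ℂ) a * b)‖) /
    (1 - ‖(a - b) / (1 - (starRingEnd ℂ) a * b)‖))

/-- The Kobayashi pseudodistance of `Ω`, defined via chains of holomorphic disks. -/
noncomputable def kobayashiDist {F : Type*} [NormedAddCommGroup F] [NormedSpace ℂ F]
    (Ω : Set F) (z w : F) : ℝ :=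
  sInf { S : ℝ | ∃ (m : ℕ) (zs : Fin (m+1) → F) (f : Fin m → ℂ → F) (a b : Fin m → ℂ),
    zs 0 = z ∧ zs (Fin.last m) = w ∧
    (∀ i : Fin m, a i ∈ Metric.ball (0:ℂ) 1 ∧ b i ∈ Metric.ball (0:ℂ) 1 ∧
      DifferentiableOn ℂ (f i) (Metric.ball (0:ℂ) 1) ∧
      Set.MapsTo (f i) (Metric.ball (0:ℂ) 1) Ω ∧
      f i (a i) = zs i.castSucc ∧ f i (b i) = zs i.succ) ∧
    S = ∑ i : Fin m, poincareDist (a i) (b i) }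

/-- The Kobayashi–Royden pseudometric of `Ω` at `p` in direction `ξ`. -/
noncomputable def kobayashiMetric {F : Type*} [NormedAddCommGroup F] [NormedSpace ℂ F]
    (Ω : Set F) (p ξ : F) : ℝ :=
  sInf { c : ℝ | 0 < c ∧ ∃ f : ℂ → F, DifferentiableOn ℂ f (Metric.ball (0:ℂ) 1) ∧
    Set.MapsTo f (Metric.ball (0:ℂ) 1) Ω ∧ f 0 = p ∧ deriv f 0 = c⁻¹ • ξ }

open Metric Set Complex

noncomputable def mob (a ζ : ℂ) : ℂ := (a - ζ) / (1 - (starRingEnd ℂ) a * ζ)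

lemma mob_denom_ne {a ζ : ℂ} (ha : a ∈ ball (0:ℂ) 1) (hζ : ζ ∈ ball (0:ℂ) 1) :
    1 - (starRingEnd ℂ) a * ζ ≠ 0 := by
  rw [mem_ball_zero_iff] at ha hζ
  intro h
  have h1 : (1:ℂ) = (starRingEnd ℂ) a * ζ := by linear_combination h
  have := congrArg (fun x : ℂ => ‖x‖) h1
  simp only [norm_one, norm_mul, Complex.norm_conj] at this
  nlinarith [norm_nonneg a, norm_nonneg ζ]

lemma mob_mem {a ζ : ℂ} (ha : a ∈ ball (0:ℂ) 1) (hζ : ζ ∈ ball (0:ℂ) 1) :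
    mob a ζ ∈ ball (0:ℂ) 1 := by
  have hd := mob_denom_ne ha hζ
  rw [mem_ball_zero_iff] at ha hζ ⊢
  have h1 : Complex.normSq (a - ζ) < Complex.normSq (1 - (starRingEnd ℂ) a * ζ) := by
    have ha2 : Complex.normSq a < 1 := by
      rw [← Complex.sq_norm] at *; nlinarith [norm_nonneg a]
    have hζ2 : Complex.normSq ζ < 1 := by
      rw [← Complex.sq_norm] at *; nlinarith [norm_nonneg ζ]
    simp only [Complex.normSq_apply, Complex.sub_re, Complex.sub_im, Complex.one_re,
      Complex.one_im, Complex.mul_re, Complex.mul_im, Complex.conj_re, Complex.conj_im] at *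
    nlinarith
  have h2 := Real.sqrt_lt_sqrt (Complex.normSq_nonneg _) h1
  rw [← Complex.norm_def, ← Complex.norm_def] at h2
  rw [mob, norm_div, div_lt_one (norm_pos_iff.mpr hd)]
  exact h2

lemma mob_invol {a b : ℂ} (ha : a ∈ ball (0:ℂ) 1) (hb : b ∈ ball (0:ℂ) 1) :
    mob a (mob a b) = b := by
  have h1 := mob_denom_ne ha hb
  have h2 := mob_denom_ne ha (mob_mem ha hb)
  have haa := mob_denom_ne ha ha
  rw [mul_comm] at haa
  simp only [mob] at h2 ⊢
  rw [div_eq_iff h2]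
  linear_combination (-(a - b)) * mul_inv_cancel₀ h1

lemma mob_diff {a : ℂ} (ha : a ∈ ball (0:ℂ) 1) :
    DifferentiableOn ℂ (mob a) (ball (0:ℂ) 1) := by
  apply DifferentiableOn.div
  · exact (differentiable_const a).differentiableOn.sub differentiableOn_id
  · exact (differentiable_const (1:ℂ)).differentiableOn.sub
      ((differentiable_const _).differentiableOn.mul differentiableOn_id)
  · exact fun ζ hζ => mob_denom_ne ha hζ

lemma schwarz_pick_s1 {h : ℂ → ℂ} (hd : DifferentiableOn ℂ h (ball (0:ℂ) 1))
    (hm : Set.MapsTo h (ball (0:ℂ) 1) (ball (0:ℂ) 1)) {a b : ℂ}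
    (ha : a ∈ ball (0:ℂ) 1) (hb : b ∈ ball (0:ℂ) 1) (h0 : h a = 0) :
    ‖h b‖ ≤ ‖mob a b‖ := by
  have hmm : Set.MapsTo (mob a) (ball (0:ℂ) 1) (ball (0:ℂ) 1) := fun ζ hζ => mob_mem ha hζ
  have hH : DifferentiableOn ℂ (h ∘ mob a) (ball (0:ℂ) 1) :=
    hd.comp (mob_diff ha) hmm
  have hHm : Set.MapsTo (h ∘ mob a) (ball (0:ℂ) 1) (ball (0:ℂ) 1) := hm.comp hmm
  have hH0 : (h ∘ mob a) 0 = 0 := by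
    simp only [Function.comp_apply, mob, map_zero, mul_zero, sub_zero, div_one]
    exact h0
  have hz : ‖mob a b‖ < 1 := by
    have := mob_mem ha hb; rwa [mem_ball_zero_iff] at this
  have := Complex.norm_le_norm_of_mapsTo_ball hH (hHm.mono_right ball_subset_closedBall) hH0 hz
  rwa [Function.comp_apply, mob_invol ha hb] at this

lemma halfplane_step {g : ℂ → ℂ} (hg : DifferentiableOn ℂ g (ball (0:ℂ) 1))
    (hre : ∀ ζ ∈ ball (0:ℂ) 1, 0 < (g ζ).re) {a b : ℂ}
    (ha : a ∈ ball (0:ℂ) 1) (hb : b ∈ ball (0:ℂ) 1) :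
    (1/2) * Real.log ((g b).re / (g a).re) ≤ poincareDist a b := by
  set A := g a with hA
  have hApos : 0 < A.re := hre a ha
  have hBpos : 0 < (g b).re := hre b hb
  have hdenom : ∀ ζ ∈ ball (0:ℂ) 1, g ζ + (starRingEnd ℂ) A ≠ 0 := by
    intro ζ hζ h
    have : (g ζ + (starRingEnd ℂ) A).re = 0 := by rw [h]; rfl
    simp only [Complex.add_re, Complex.conj_re] at this
    have := hre ζ hζ
    linarith
  set h : ℂ → ℂ := fun ζ => (g ζ - A) / (g ζ + (starRingEnd ℂ) A) with hh
  have hd : DifferentiableOn ℂ h (ball (0:ℂ) 1) := by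
    apply DifferentiableOn.div
    · exact hg.sub (differentiable_const A).differentiableOn
    · exact hg.add (differentiable_const _).differentiableOn
    · exact hdenom
  have hm : Set.MapsTo h (ball (0:ℂ) 1) (ball (0:ℂ) 1) := by
    intro ζ hζ
    rw [mem_ball_zero_iff, hh]
    simp only
    rw [norm_div, div_lt_one (norm_pos_iff.mpr (hdenom ζ hζ))]
    have h1 : Complex.normSq (g ζ - A) < Complex.normSq (g ζ + (starRingEnd ℂ) A) := by
      have h2 := hre ζ hζ
      simp only [Complex.normSq_apply, Complex.sub_re, Complex.sub_im, Complex.add_re,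
        Complex.add_im, Complex.conj_re, Complex.conj_im]
      nlinarith
    have h2 := Real.sqrt_lt_sqrt (Complex.normSq_nonneg _) h1
    rwa [← Complex.norm_def, ← Complex.norm_def] at h2
  have h0 : h a = 0 := by simp [hh, hA]
  have hSP := schwarz_pick_s1 hd hm ha hb h0
  set τ := h b with hτ
  set ρ := ‖mob a b‖ with hρ
  have hρ1 : ρ < 1 := by
    have := mob_mem ha hb; rwa [mem_ball_zero_iff] at this
  have hρ0 : 0 ≤ ρ := norm_nonneg _
  have ht1 : ‖τ‖ < 1 := lt_of_le_of_lt hSP hρ1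
  have ht0 : 0 ≤ ‖τ‖ := norm_nonneg _
  -- key algebraic identity
  have e1 : τ * (g b + (starRingEnd ℂ) A) = g b - A :=
    div_mul_cancel₀ _ (hdenom b hb)
  have key : g b * (1 - τ) = A + τ * (starRingEnd ℂ) A := by linear_combination -e1
  have hre2 := congrArg Complex.re key
  have him2 := congrArg Complex.im key
  simp only [Complex.mul_re, Complex.mul_im, Complex.sub_re, Complex.sub_im, Complex.add_re,
    Complex.add_im, Complex.one_re, Complex.one_im, Complex.conj_re, Complex.conj_im] at hre2 him2
  have ident : (g b).re * Complex.normSq (1 - τ) = A.re * (1 - Complex.normSq τ) := by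
    simp only [Complex.normSq_apply, Complex.sub_re, Complex.sub_im, Complex.one_re,
      Complex.one_im]
    linear_combination (1 - τ.re) * hre2 - τ.im * him2
  -- numeric estimates
  have hns1 : Complex.normSq τ = ‖τ‖ ^ 2 := (Complex.sq_norm τ).symm
  have hns2 : (1 - ‖τ‖)^2 ≤ Complex.normSq (1 - τ) := by
    have htri : 1 - ‖τ‖ ≤ ‖1 - τ‖ := by
      have := norm_sub_norm_le (1:ℂ) τ
      simpa using this
    have := Complex.sq_norm (1 - τ)
    nlinarith [norm_nonneg (1 - τ)]
  have hratio : (g b).re / A.re ≤ (1 + ρ) / (1 - ρ) := by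
    rw [div_le_div_iff₀ hApos (by linarith)]
    have hnspos : 0 < Complex.normSq (1 - τ) := by nlinarith
    rw [← mul_le_mul_iff_of_pos_right hnspos]
    have expand : (g b).re * (1 - ρ) * Complex.normSq (1 - τ)
        = A.re * (1 - Complex.normSq τ) * (1 - ρ) := by
      linear_combination (1 - ρ) * ident
    rw [expand]
    set t := ‖τ‖ with htdef
    have step1 : (1 - t^2) * (1 - ρ) ≤ (1 + ρ) * (1 - t)^2 := by
      nlinarith [mul_nonneg (by linarith : (0:ℝ) ≤ 1 - t) (by linarith : (0:ℝ) ≤ ρ - t)]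
    have step2 : A.re * ((1 - t^2) * (1 - ρ)) ≤ A.re * ((1 + ρ) * (1 - t)^2) :=
      mul_le_mul_of_nonneg_left step1 hApos.le
    have step3 : A.re * ((1 + ρ) * (1 - t)^2) ≤ A.re * ((1 + ρ) * Complex.normSq (1 - τ)) := by
      have h4 : (1 + ρ) * (1 - t)^2 ≤ (1 + ρ) * Complex.normSq (1 - τ) :=
        mul_le_mul_of_nonneg_left hns2 (by linarith)
      exact mul_le_mul_of_nonneg_left h4 hApos.le
    rw [hns1]
    nlinarith [step2, step3]
  have hq : 0 < (g b).re / A.re := div_pos hBpos hApos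
  have := Real.log_le_log hq hratio
  have hmob : mob a b = (a - b) / (1 - (starRingEnd ℂ) a * b) := rfl
  rw [poincareDist, ← hmob, ← hρ]
  linarith

lemma disk_step {n : ℕ} {Ω : Set (EuclideanSpace ℂ (Fin n))}
    (hopen : IsOpen Ω) (hconv : Convex ℝ Ω) (hproper : Ω ≠ Set.univ)
    {f : ℂ → EuclideanSpace ℂ (Fin n)} (hf : DifferentiableOn ℂ f (ball (0:ℂ) 1))
    (hmaps : Set.MapsTo f (ball (0:ℂ) 1) Ω) {a b : ℂ}
    (ha : a ∈ ball (0:ℂ) 1) (hb : b ∈ ball (0:ℂ) 1) :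
    (1/2) * Real.log (Metric.infDist (f b) Ωᶜ / Metric.infDist (f a) Ωᶜ)
      ≤ poincareDist a b := by
  set p := f a with hp
  set q := f b with hq
  have hpΩ : p ∈ Ω := hmaps ha
  have hqΩ : q ∈ Ω := hmaps hb
  have hcne : Ωᶜ.Nonempty := Set.nonempty_compl.mpr hproper
  have hcclosed : IsClosed Ωᶜ := hopen.isClosed_compl
  have hdp : 0 < Metric.infDist p Ωᶜ :=
    (hcclosed.notMem_iff_infDist_pos hcne).mp (by simpa using hpΩ)
  have hdq : 0 < Metric.infDist q Ωᶜ :=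
    (hcclosed.notMem_iff_infDist_pos hcne).mp (by simpa using hqΩ)
  -- nearest point to p
  obtain ⟨ξ, hξmem, hξdist⟩ := hcclosed.exists_infDist_eq_dist hcne p
  obtain ⟨φ, hφ⟩ := geometric_hahn_banach_open_point hconv hopen (by simpa using hξmem)
  set c := φ ξ with hc
  have hφp : φ p < c := hφ p hpΩ
  have hφq : φ q < c := hφ q hqΩ
  have hφne : (0:ℝ) < ‖φ‖ := by
    rcases eq_or_lt_of_le (norm_nonneg φ) with h | h
    · exfalso
      have : φ = 0 := by rwa [eq_comm, ContinuousLinearMap.opNorm_zero_iff] at h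
      rw [this] at hφp
      simp [hc, this] at hφp
    · exact h
  -- dist p lower bound : c - φ p ≤ ‖φ‖ * infDist p Ωᶜ
  have hlb : c - φ p ≤ ‖φ‖ * Metric.infDist p Ωᶜ := by
    have h1 : c - φ p = φ (ξ - p) := by rw [map_sub]
    have h2 : φ (ξ - p) ≤ ‖φ‖ * ‖ξ - p‖ := by
      have h3 := φ.le_opNorm (ξ - p)
      rw [Real.norm_eq_abs] at h3
      exact (le_abs_self _).trans h3
    rw [hξdist, dist_eq_norm, h1]
    calc φ (ξ - p) ≤ ‖φ‖ * ‖ξ - p‖ := h2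
    _ = ‖φ‖ * ‖p - ξ‖ := by rw [norm_sub_rev]
  -- dist q upper bound : ‖φ‖ * infDist q Ωᶜ ≤ c - φ q
  have hub : ‖φ‖ * Metric.infDist q Ωᶜ ≤ c - φ q := by
    rw [← le_div_iff₀ hdq]
    apply le_of_forall_lt
    intro r hr
    rcases le_or_gt r 0 with hr0 | hr0
    · exact lt_of_le_of_lt hr0 (div_pos (by linarith) hdq)
    obtain ⟨u, hu1, hu2⟩ := φ.exists_lt_apply_of_lt_opNorm hr
    rw [Real.norm_eq_abs] at hu2
    set u' := if 0 ≤ φ u then u else -u with hu'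
    have hφu' : r < φ u' := by
      rw [hu']
      split_ifs with hs
      · rwa [_root_.abs_of_nonneg hs] at hu2
      · rw [map_neg]; rwa [_root_.abs_of_neg (lt_of_not_ge hs)] at hu2
    have hnu' : ‖u'‖ < 1 := by rw [hu']; split_ifs <;> simpa
    have hφu'pos : 0 < φ u' := lt_trans hr0 hφu'
    set B := c - φ q with hB
    have hBpos : 0 < B := by rw [hB]; linarith
    set y := q + (B / φ u') • u' with hy
    have hyc : y ∈ Ωᶜ := by
      intro hyΩ
      have := hφ y hyΩ
      rw [hy, map_add, map_smul] at this
      simp only [smul_eq_mul] at this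
      rw [div_mul_cancel₀ _ (ne_of_gt hφu'pos)] at this
      rw [hB] at this
      linarith
    have hdy : Metric.infDist q Ωᶜ ≤ dist q y := Metric.infDist_le_dist_of_mem hyc
    have hdist : dist q y = (B / φ u') * ‖u'‖ := by
      rw [hy, dist_comm, dist_eq_norm, add_sub_cancel_left, norm_smul, Real.norm_eq_abs,
        _root_.abs_of_pos (div_pos hBpos hφu'pos)]
    have h6 : (B / φ u') * ‖u'‖ ≤ B / φ u' := by
      nlinarith [div_pos hBpos hφu'pos, norm_nonneg u']
    have h7 : B / φ u' < B / r := div_lt_div_of_pos_left hBpos hr0 hφu'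
    rw [lt_div_iff₀ hdq]
    have h8 : Metric.infDist q Ωᶜ < B / r := by
      rw [hdist] at hdy
      linarith
    have h9 := (lt_div_iff₀ hr0).mp h8
    linarith
  -- complexify φ
  set ℓ := (ContinuousLinearMap.extendTo𝕜' φ : EuclideanSpace ℂ (Fin n) →L[ℂ] ℂ) with hℓ
  have hℓre : ∀ x, (ℓ x).re = φ x := by
    intro x
    rw [hℓ]
    exact StrongDual.re_extendRCLike_apply (𝕜 := ℂ) φ x
  set g : ℂ → ℂ := fun ζ => (c : ℂ) - ℓ (f ζ) with hg2
  have hgdiff : DifferentiableOn ℂ g (ball (0:ℂ) 1) :=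
    DifferentiableOn.const_sub (ℓ.differentiable.comp_differentiableOn hf) _
  have hgre : ∀ ζ ∈ ball (0:ℂ) 1, 0 < (g ζ).re := by
    intro ζ hζ
    simp only [hg2, Complex.sub_re, Complex.ofReal_re, hℓre]
    have := hφ (f ζ) (hmaps hζ)
    linarith
  have hL2 := halfplane_step hgdiff hgre ha hb
  have hga : (g a).re = c - φ p := by
    simp only [hg2, Complex.sub_re, Complex.ofReal_re, hℓre]
    rfl
  have hgb : (g b).re = c - φ q := by
    simp only [hg2, Complex.sub_re, Complex.ofReal_re, hℓre]
    rfl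
  rw [hga, hgb] at hL2
  refine le_trans ?_ hL2
  have hlog : Real.log (Metric.infDist q Ωᶜ / Metric.infDist p Ωᶜ)
      ≤ Real.log ((c - φ q) / (c - φ p)) := by
    apply Real.log_le_log (div_pos hdq hdp)
    rw [div_le_div_iff₀ hdp (by linarith)]
    nlinarith [mul_le_mul_of_nonneg_left hlb hdq.le,
      mul_le_mul_of_nonneg_right hub hdp.le]
  linarith

lemma fin_telescope : ∀ (m : ℕ) (G : Fin (m+1) → ℝ),
    ∑ i : Fin m, (G i.succ - G i.castSucc) = G (Fin.last m) - G 0 := by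
  intro m
  induction m with
  | zero => intro G; simp
  | succ m ih =>
    intro G
    rw [Fin.sum_univ_castSucc]
    have h1 : ∀ i : Fin m, (i.castSucc).succ = (i.succ).castSucc := by
      intro i; rfl
    have h2 : ∑ i : Fin m, (G (i.castSucc).succ - G (i.castSucc).castSucc)
        = (fun j : Fin (m+1) => G j.castSucc) (Fin.last m)
          - (fun j : Fin (m+1) => G j.castSucc) 0 := by
      rw [← ih (fun j : Fin (m+1) => G j.castSucc)]
      apply Finset.sum_congr rfl
      intro i _
      rw [h1 i]
    simp only at h2
    rw [h2]
    have h3 : (Fin.last m).succ = Fin.last (m+1) := rfl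
    have h4 : ((0 : Fin (m+1)).castSucc) = (0 : Fin (m+2)) := rfl
    rw [h3]
    ring_nf
    rw [h4]
    ring

lemma segment_compact {E : Type*} [NormedAddCommGroup E] [NormedSpace ℝ E] (x y : E) :
    IsCompact (segment ℝ x y) := by
  rw [segment_eq_image' ℝ x y]
  exact (isCompact_Icc).image (by continuity)

/-- Lower bound for the Kobayashi distance on a convex domain `Ω ⊊ ℂⁿ`:
`k_Ω(z,w) ≥ (1/2) log(dist(w,Ωᶜ)/dist(z,Ωᶜ))`. -/
theorem stmt_1 (n : ℕ) (Ω : Set (EuclideanSpace ℂ (Fin n)))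
    (hopen : IsOpen Ω) (hconv : Convex ℝ Ω) (hne : Ω.Nonempty) (hproper : Ω ≠ Set.univ) :
    ∀ z ∈ Ω, ∀ w ∈ Ω,
      (1 / 2) * Real.log (Metric.infDist w Ωᶜ / Metric.infDist z Ωᶜ)
        ≤ kobayashiDist Ω z w := by
  intro z hz w hw
  have hcne : Ωᶜ.Nonempty := Set.nonempty_compl.mpr hproper
  have hcclosed : IsClosed Ωᶜ := hopen.isClosed_compl
  have hdpos : ∀ x ∈ Ω, 0 < Metric.infDist x Ωᶜ := fun x hx =>
    (hcclosed.notMem_iff_infDist_pos hcne).mp (by simpa using hx)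
  rw [kobayashiDist]
  apply le_csInf
  · -- the chain set is nonempty
    by_cases hzw : z = w
    · refine ⟨0, 0, fun _ => z, Fin.elim0, Fin.elim0, Fin.elim0, rfl, hzw,
        fun i => i.elim0, by simp⟩
    · -- segment construction
      set K := segment ℝ z w with hK
      have hKΩ : K ⊆ Ω := hconv.segment_subset hz hw
      obtain ⟨x₀, hx₀K, hx₀min⟩ := (segment_compact z w).exists_isMinOn
        ⟨z, left_mem_segment ℝ z w⟩ (Metric.continuous_infDist_pt Ωᶜ).continuousOn
      set ε := Metric.infDist x₀ Ωᶜ with hε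
      have hεpos : 0 < ε := hdpos x₀ (hKΩ hx₀K)
      have hKball : ∀ x ∈ K, ∀ y, dist x y < ε → y ∈ Ω := by
        intro x hx y hy
        by_contra hyΩ
        have h1 : Metric.infDist x Ωᶜ ≤ dist x y := Metric.infDist_le_dist_of_mem hyΩ
        have h2 : ε ≤ Metric.infDist x Ωᶜ := hx₀min hx
        linarith
      have hd0 : (0:ℝ) < ‖w - z‖ := by
        rw [norm_pos_iff, sub_ne_zero]
        exact fun h => hzw h.symm
      obtain ⟨N, hN⟩ := exists_nat_gt (2 * ‖w - z‖ / ε)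
      have hNpos : (0:ℝ) < N := lt_trans (by positivity) hN
      have hNne : (N:ℝ) ≠ 0 := ne_of_gt hNpos
      have hNCne : (N:ℂ) ≠ 0 := by
        simpa using hNne
      set zs : Fin (N+1) → EuclideanSpace ℂ (Fin n) :=
        fun i => z + (((i:ℕ):ℝ)/N) • (w - z) with hzs
      have hzsK : ∀ i : Fin (N+1), zs i ∈ K := by
        intro i
        rw [hK, segment_eq_image' ℝ z w]
        refine ⟨((i:ℕ):ℝ)/N, ⟨by positivity, ?_⟩, rfl⟩
        rw [div_le_one hNpos]
        exact_mod_cast Nat.le_of_lt_succ i.isLt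
      set f : Fin N → ℂ → EuclideanSpace ℂ (Fin n) :=
        fun i ζ => zs i.castSucc + (ζ * (2/(N:ℂ))) • (w - z) with hf
      refine ⟨∑ i : Fin N, poincareDist 0 (1/2), N, zs, f, fun _ => 0, fun _ => (1/2 : ℂ),
        ?_, ?_, ?_, rfl⟩
      · simp [hzs]
      · simp only [hzs, Fin.val_last]
        rw [div_self hNne, one_smul]
        abel
      · intro i
        refine ⟨by simp, ?_, ?_, ?_, ?_, ?_⟩
        · rw [mem_ball_zero_iff]
          norm_num
        · apply DifferentiableOn.const_add
          exact ((differentiable_id.mul_const _).smul_const _).differentiableOn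
        · intro ζ hζ
          rw [mem_ball_zero_iff] at hζ
          apply hKball (zs i.castSucc) (hzsK i.castSucc)
          rw [dist_eq_norm, hf]
          simp only [add_sub_cancel_left, norm_neg]
          rw [norm_sub_rev, add_sub_cancel_left, norm_smul]
          have hnorm : ‖ζ * (2/(N:ℂ))‖ < 2 / N := by
            rw [norm_mul]
            have h2 : ‖(2/(N:ℂ))‖ = 2/(N:ℝ) := by
              rw [norm_div]
              congr 1
              · norm_num
              · simp [Complex.norm_natCast]
            rw [h2]
            calc ‖ζ‖ * (2/(N:ℝ)) < 1 * (2/(N:ℝ)) := by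
                  apply mul_lt_mul_of_pos_right hζ (by positivity)
              _ = 2/(N:ℝ) := one_mul _
          calc ‖ζ * (2/(N:ℂ))‖ * ‖w - z‖ < (2/(N:ℝ)) * ‖w - z‖ :=
                mul_lt_mul_of_pos_right hnorm hd0
            _ < ε := by
                rw [div_mul_eq_mul_div, div_lt_iff₀ hNpos]
                have := (div_lt_iff₀ hεpos).mp hN
                linarith
        · rw [hf]
          simp
        · rw [hf]
          simp only
          rw [hzs]
          simp only [Fin.coe_castSucc, Fin.val_succ]
          have harith : ((1:ℂ)/2) * (2/(N:ℂ)) = ((1:ℝ)/N : ℝ) := by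
            push_cast
            field_simp
          rw [harith]
          rw [show (((1:ℝ)/N : ℝ) : ℂ) • (w - z) = ((1:ℝ)/N) • (w - z) from by
            rw [← Complex.coe_algebraMap, algebraMap_smul]]
          rw [add_assoc, ← add_smul]
          congr 1
          push_cast
          ring_nf
  · -- lower bound for every chain
    rintro S ⟨m, zs, f, A, B, h0, hlast, hall, rfl⟩
    have hmem : ∀ i : Fin (m+1), zs i ∈ Ω := by
      intro i
      rcases lt_or_eq_of_le (Nat.le_of_lt_succ i.isLt) with hi | hi
      · obtain ⟨hA, _, _, hmapsTo, hfa, _⟩ := hall ⟨i.val, hi⟩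
        have : zs (Fin.castSucc ⟨i.val, hi⟩) ∈ Ω := hfa ▸ hmapsTo hA
        convert this using 2
        rfl
      · have : i = Fin.last m := by ext; exact hi
        rw [this, hlast]
        exact hw
    have step : ∀ i : Fin m,
        (1/2) * (Real.log (Metric.infDist (zs i.succ) Ωᶜ)
          - Real.log (Metric.infDist (zs i.castSucc) Ωᶜ)) ≤ poincareDist (A i) (B i) := by
      intro i
      obtain ⟨hA, hB, hdiff, hmapsTo, hfa, hfb⟩ := hall i
      have hds := disk_step hopen hconv hproper hdiff hmapsTo hA hB
      rw [hfa, hfb] at hds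
      rw [← Real.log_div (ne_of_gt (hdpos _ (hmem i.succ)))
        (ne_of_gt (hdpos _ (hmem i.castSucc)))]
      exact hds
    have htel := fin_telescope m (fun i => Real.log (Metric.infDist (zs i) Ωᶜ))
    calc (1/2) * Real.log (Metric.infDist w Ωᶜ / Metric.infDist z Ωᶜ)
        = (1/2) * (Real.log (Metric.infDist w Ωᶜ) - Real.log (Metric.infDist z Ωᶜ)) := by
          rw [Real.log_div (ne_of_gt (hdpos w hw)) (ne_of_gt (hdpos z hz))]
      _ = ∑ i : Fin m, (1/2) * (Real.log (Metric.infDist (zs i.succ) Ωᶜ)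
            - Real.log (Metric.infDist (zs i.castSucc) Ωᶜ)) := by
          rw [← Finset.mul_sum, htel, h0, hlast]
      _ ≤ ∑ i : Fin m, poincareDist (A i) (B i) := Finset.sum_le_sum fun i _ => step i
end

section
/- Let δp, α, β be positive reals with α = |ζ − p|, β = δζ − δp > 0, and p ∈ closure(D(ζ, δζ)) (so α ≤ δζ). Define r(t) = (1−t)δp + tδζ and φ(t) = r(t)/(r(t)² − t²α²) for t ∈ [0,1). If (α² − β²)(2δp + β) ≤ β·δp², then α < δζ, φ extends continuously to [0,1], φ is strictly decreasing on [0,1), and its minimum value on [0,1] equals δζ/(δζ² − α²). -/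
/-- Minimization of the objective function `φ(t) = r(t)/(r(t)² − t²α²)`,
`r(t) = (1−t)δp + tδζ`, in the case `(α²−β²)(2δp+β) ≤ βδp²` (β = δζ−δp):
then `α < δζ`, `φ` extends continuously to `[0,1]`, is strictly decreasing on `[0,1)`,
and its minimum value on `[0,1]` is `δζ/(δζ²−α²)`. -/
theorem stmt_4 (δp δζ α β : ℝ) (hδp : 0 < δp) (hα : 0 < α)
    (hβdef : β = δζ - δp) (hβ : 0 < β) (hαδζ : α ≤ δζ)
    (r φ : ℝ → ℝ)
    (hr : ∀ t, r t = (1 - t) * δp + t * δζ)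
    (hφ : ∀ t, φ t = r t / ((r t) ^ 2 - t ^ 2 * α ^ 2))
    (hcond : (α ^ 2 - β ^ 2) * (2 * δp + β) ≤ β * δp ^ 2) :
    α < δζ ∧ ContinuousOn φ (Set.Icc 0 1) ∧ StrictAntiOn φ (Set.Ico 0 1) ∧
      IsLeast (φ '' Set.Icc 0 1) (δζ / (δζ ^ 2 - α ^ 2)) := by
  have hφfun : φ = fun t => ((1 - t) * δp + t * δζ) /
      (((1 - t) * δp + t * δζ) ^ 2 - t ^ 2 * α ^ 2) := by
    funext t; rw [hφ, hr]
  subst hφfun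
  subst hβdef
  clear hr hφ
  -- basic positivity
  have hδζ : 0 < δζ := by linarith
  -- α² < δζ²
  have hα2 : α ^ 2 < δζ ^ 2 := by
    by_contra h
    push_neg at h
    have h1 : 0 ≤ (α ^ 2 - δζ ^ 2) * (2 * δp + (δζ - δp)) :=
      mul_nonneg (by linarith) (by linarith)
    nlinarith [mul_pos (mul_pos hδp hδp) hδp, mul_pos (mul_pos hδp hδp) hβ,
      mul_pos (mul_pos hδp hβ) hβ]
  have hαζ : α < δζ := lt_of_pow_lt_pow_left₀ 2 hδζ.le hα2
  -- denominator positivity on [0,1]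
  set F : ℝ → ℝ := fun t => (1 - t) * δp + t * δζ with hF
  set D : ℝ → ℝ := fun t => ((1 - t) * δp + t * δζ) ^ 2 - t ^ 2 * α ^ 2 with hD
  have hFsub : ∀ t ∈ Set.Icc (0:ℝ) 1, t * α < F t := by
    intro t ht
    obtain ⟨ht0, ht1⟩ := ht
    rcases lt_or_eq_of_le ht1 with h | h
    · simp only [hF]; nlinarith [mul_nonneg ht0 (sub_nonneg.2 hαζ.le)]
    · subst h; simp only [hF]; nlinarith
  have hDpos : ∀ t ∈ Set.Icc (0:ℝ) 1, 0 < D t := by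
    intro t ht
    have h1 := hFsub t ht
    have h2 : 0 ≤ t * α := mul_nonneg ht.1 hα.le
    have h3 : 0 < F t + t * α := by linarith
    have : 0 < (F t - t * α) * (F t + t * α) := mul_pos (by linarith) h3
    simp only [hD]; simp only [hF] at this; nlinarith [this]
  -- derivative
  have hFder : ∀ t : ℝ, HasDerivAt F (δζ - δp) t := by
    intro t
    have h : HasDerivAt (fun s : ℝ => (1 - s) * δp + s * δζ) ((-1) * δp + 1 * δζ) t :=
      (((hasDerivAt_id t).const_sub 1).mul_const δp).add ((hasDerivAt_id t).mul_const δζ)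
    simpa [hF] using h.congr_deriv (by ring)
  have hDder : ∀ t : ℝ, HasDerivAt D (2 * F t * (δζ - δp) - 2 * t * α ^ 2) t := by
    intro t
    have h1 : HasDerivAt (fun s => F s ^ 2) (2 * F t * (δζ - δp)) t := by
      simpa [mul_comm, mul_assoc, mul_left_comm] using (hFder t).fun_pow 2
    have h2 : HasDerivAt (fun s : ℝ => s ^ 2 * α ^ 2) (2 * t * α ^ 2) t := by
      simpa [mul_comm, mul_assoc] using (hasDerivAt_pow 2 t).mul_const (α ^ 2)
    simpa [hD, hF] using h1.fun_sub h2
  have hφder : ∀ t ∈ Set.Icc (0:ℝ) 1,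
      HasDerivAt (fun t => F t / D t)
        (((δζ - δp) * D t - F t * (2 * F t * (δζ - δp) - 2 * t * α ^ 2)) / D t ^ 2) t := by
    intro t ht
    exact (hFder t).div (hDder t) (hDpos t ht).ne'
  -- numerator negativity on [0,1)
  have hnum : ∀ t ∈ Set.Ico (0:ℝ) 1,
      (δζ - δp) * D t - F t * (2 * F t * (δζ - δp) - 2 * t * α ^ 2) < 0 := by
    intro t ht
    obtain ⟨ht0, ht1⟩ := ht
    simp only [hD, hF]
    rcases le_or_gt (α ^ 2) ((δζ - δp) ^ 2) with h | h
    · have h1 : 0 ≤ ((δζ - δp) ^ 2 - α ^ 2) * (t * (2 * δp + (δζ - δp) * t)) := by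
        apply mul_nonneg (by linarith)
        apply mul_nonneg ht0
        nlinarith
      nlinarith [mul_pos hβ (pow_pos hδp 2)]
    · have h2 : 0 < (α ^ 2 - (δζ - δp) ^ 2) * (2 * δp * (1 - t) + (δζ - δp) * (1 - t ^ 2)) := by
        apply mul_pos (by linarith)
        have ha : 0 < 2 * δp * (1 - t) := mul_pos (by linarith) (by linarith)
        have hb2 : 0 ≤ (δζ - δp) * (1 - t ^ 2) := mul_nonneg hβ.le (by nlinarith)
        linarith
      nlinarith
  -- strict antitonicity on [0,1]
  have hcont : ContinuousOn (fun t => F t / D t) (Set.Icc 0 1) := by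
    have hFc : Continuous F :=
      ((continuous_const.sub continuous_id).mul continuous_const).add
        (continuous_id.mul continuous_const)
    have hDc : Continuous D :=
      (hFc.pow 2).sub ((continuous_pow 2).mul continuous_const)
    exact hFc.continuousOn.div hDc.continuousOn fun t ht => (hDpos t ht).ne'
  have hanti : StrictAntiOn (fun t => F t / D t) (Set.Icc 0 1) := by
    apply strictAntiOn_of_deriv_neg (convex_Icc 0 1) hcont
    intro t ht
    rw [interior_Icc] at ht
    have htI : t ∈ Set.Icc (0:ℝ) 1 := ⟨ht.1.le, ht.2.le⟩
    rw [(hφder t htI).deriv]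
    apply div_neg_of_neg_of_pos (hnum t ⟨ht.1.le, ht.2⟩)
    exact pow_pos (hDpos t htI) 2
  have hval : F 1 / D 1 = δζ / (δζ ^ 2 - α ^ 2) := by
    norm_num [hF, hD]
  refine ⟨hαζ, hcont, hanti.mono Set.Ico_subset_Icc_self, ?_, ?_⟩
  · exact ⟨1, ⟨by norm_num, le_refl 1⟩, hval⟩
  · rintro y ⟨t, ht, rfl⟩
    rcases eq_or_lt_of_le ht.2 with h | h
    · subst h
      show δζ / (δζ ^ 2 - α ^ 2) ≤ F 1 / D 1
      rw [hval]
    · show δζ / (δζ ^ 2 - α ^ 2) ≤ F t / D t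
      rw [← hval]
      exact (hanti ⟨ht.1, ht.2⟩ ⟨zero_le_one, le_refl 1⟩ h).le
end

section
/- Let Ω ⊆ ℂ be an open bounded convex set and p ∈ Ω. Define r•_Ω(p) = sup{r > 0 : ∃ζ ∈ Ω with p ∈ D(ζ,r) ⊆ Ω} and S_Ω(p) = {ζ ∈ Ω : p ∈ closure(D(ζ, r•_Ω(p))) and D(ζ, r•_Ω(p)) ⊆ Ω}. Then S_Ω(p) is a non-empty compact convex subset of Ω. -/
/-- `rsup Ω p` : supremum of radii of open disks contained in `Ω` containing `p`. -/
noncomputable def rsup (Ω : Set ℂ) (p : ℂ) : ℝ :=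
  sSup {r : ℝ | 0 < r ∧ ∃ ζ : ℂ, p ∈ Metric.ball ζ r ∧ Metric.ball ζ r ⊆ Ω}

/-- `Sset Ω p` : centres of maximal disks in `Ω` whose closure contains `p`. -/
def Sset (Ω : Set ℂ) (p : ℂ) : Set ℂ :=
  {ζ | ζ ∈ Ω ∧ p ∈ closure (Metric.ball ζ (rsup Ω p)) ∧ Metric.ball ζ (rsup Ω p) ⊆ Ω}

/-- `S_Ω(p)` is a non-empty compact convex subset of `Ω`. -/
theorem stmt_7 (Ω : Set ℂ) (hΩ : IsOpen Ω) (hbd : Bornology.IsBounded Ω)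
    (hconv : Convex ℝ Ω) (p : ℂ) (hp : p ∈ Ω) :
    (Sset Ω p).Nonempty ∧ IsCompact (Sset Ω p) ∧ Convex ℝ (Sset Ω p) ∧ Sset Ω p ⊆ Ω := by
  classical
  set A : Set ℝ := {r : ℝ | 0 < r ∧ ∃ ζ : ℂ, p ∈ Metric.ball ζ r ∧ Metric.ball ζ r ⊆ Ω}
    with hAdef
  obtain ⟨ε, hε, hball⟩ := Metric.isOpen_iff.mp hΩ p hp
  have hAne : A.Nonempty := ⟨ε, hε, p, Metric.mem_ball_self hε, hball⟩
  obtain ⟨M, hM⟩ := hbd.subset_closedBall p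
  have hAbdd : BddAbove A := by
    refine ⟨4 * M + 1, ?_⟩
    rintro r ⟨hr, ζ, hpζ, hsub⟩
    have hζ : dist ζ p ≤ M := hM (hsub (Metric.mem_ball_self hr))
    have hnorm : ‖((r / 2 : ℝ) : ℂ)‖ = r / 2 := by
      rw [Complex.norm_real, Real.norm_of_nonneg (by linarith)]
    have hx : (ζ + (r / 2 : ℝ) : ℂ) ∈ Metric.ball ζ r := by
      simp only [Metric.mem_ball, Complex.dist_eq]
      rw [add_sub_cancel_left, hnorm]
      linarith
    have hx' : dist (ζ + (r / 2 : ℝ) : ℂ) p ≤ M := hM (hsub hx)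
    have hd : dist (ζ + (r / 2 : ℝ) : ℂ) ζ = r / 2 := by
      simp only [Complex.dist_eq]
      rw [add_sub_cancel_left, hnorm]
    have := dist_triangle (ζ + (r / 2 : ℝ) : ℂ) p ζ
    rw [dist_comm p ζ] at this
    linarith [hd ▸ this]
  set R : ℝ := rsup Ω p with hRdef
  have hRA : R = sSup A := rfl
  have hR : 0 < R := lt_of_lt_of_le hε (le_csSup hAbdd ⟨hε, p, Metric.mem_ball_self hε, hball⟩)
  -- characterization of Sset
  have hSeq : Sset Ω p = Metric.closedBall p R ∩ {ζ : ℂ | Metric.ball ζ R ⊆ Ω} := by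
    ext ζ
    simp only [Sset, Set.mem_setOf_eq, Set.mem_inter_iff, Metric.mem_closedBall,
      closure_ball ζ hR.ne', ← hRdef]
    constructor
    · rintro ⟨-, h1, h2⟩
      exact ⟨by rw [dist_comm]; exact h1, h2⟩
    · rintro ⟨h1, h2⟩
      exact ⟨h2 (Metric.mem_ball_self hR), by rw [dist_comm] at h1; exact h1, h2⟩
  have hCclosed : IsClosed {ζ : ℂ | Metric.ball ζ R ⊆ Ω} := by
    refine isClosed_of_closure_subset ?_
    intro ζ hζ x hx
    have hδ : 0 < R - dist x ζ := by simpa [Metric.mem_ball] using hx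
    obtain ⟨ζ', hζ', hd⟩ := Metric.mem_closure_iff.mp hζ _ hδ
    refine hζ' ?_
    have : dist x ζ' ≤ dist x ζ + dist ζ ζ' := dist_triangle x ζ ζ'
    simp only [Metric.mem_ball]
    linarith
  have hCconv : Convex ℝ {ζ : ℂ | Metric.ball ζ R ⊆ Ω} := by
    intro ζ₁ h1 ζ₂ h2 a b ha hb hab x hx
    have hb' : b = 1 - a := by linarith
    subst hb'
    have hx1 : x - (a • ζ₁ + (1 - a) • ζ₂) + ζ₁ ∈ Metric.ball ζ₁ R := by
      simp only [Metric.mem_ball, Complex.dist_eq, add_sub_cancel_right]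
      simpa [Metric.mem_ball, Complex.dist_eq] using hx
    have hx2 : x - (a • ζ₁ + (1 - a) • ζ₂) + ζ₂ ∈ Metric.ball ζ₂ R := by
      simp only [Metric.mem_ball, Complex.dist_eq, add_sub_cancel_right]
      simpa [Metric.mem_ball, Complex.dist_eq] using hx
    have hmem := hconv (h1 hx1) (h2 hx2) ha hb hab
    have hxeq : a • (x - (a • ζ₁ + (1 - a) • ζ₂) + ζ₁)
        + (1 - a) • (x - (a • ζ₁ + (1 - a) • ζ₂) + ζ₂) = x := by
      module
    rwa [hxeq] at hmem
  -- nonempty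
  have hne : (Sset Ω p).Nonempty := by
    have hseq : ∀ n : ℕ, ∃ ζ : ℂ, dist p ζ ≤ R ∧ Metric.ball ζ (R - 1 / (n + 1)) ⊆ Ω := by
      intro n
      have hlt : R - 1 / (n + 1) < sSup A := by
        rw [← hRA]
        have : (0:ℝ) < 1 / (n + 1) := by positivity
        linarith
      obtain ⟨r, hrA, hrlt⟩ := exists_lt_of_lt_csSup hAne hlt
      obtain ⟨hr0, ζ, hpζ, hsub⟩ := hrA
      have hrR : r ≤ R := le_csSup hAbdd ⟨hr0, ζ, hpζ, hsub⟩
      refine ⟨ζ, le_trans (le_of_lt (Metric.mem_ball.mp hpζ)) hrR, ?_⟩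
      exact fun y hy => hsub (Metric.mem_ball.mpr (lt_of_lt_of_le (Metric.mem_ball.mp hy)
        (by linarith)))
    choose f hf1 hf2 using hseq
    have hfK : ∀ n, f n ∈ Metric.closedBall p R := fun n => by
      simpa [Metric.mem_closedBall, dist_comm] using hf1 n
    obtain ⟨ζ, hζK, φ, hφ, hten⟩ :=
      (isCompact_closedBall p R).tendsto_subseq hfK
    refine ⟨ζ, ?_⟩
    rw [hSeq]
    constructor
    · exact hζK
    · intro x hx
      have hδ : 0 < R - dist x ζ := by simpa [Metric.mem_ball] using hx
      set δ := R - dist x ζ with hδdef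
      have h1 : ∀ᶠ n in Filter.atTop, dist (f (φ n)) ζ < δ / 2 := by
        have := (Metric.tendsto_nhds.mp hten) (δ / 2) (by linarith)
        simpa using this
      have h2 : ∀ᶠ n in Filter.atTop, (1 : ℝ) / (φ n + 1) < δ / 2 := by
        obtain ⟨N, hN⟩ := exists_nat_gt (2 / δ)
        filter_upwards [Filter.eventually_ge_atTop N] with n hn
        have hφn : (N : ℝ) ≤ (φ n : ℝ) := by
          exact_mod_cast le_trans hn (hφ.le_apply)
        have hpos : (0:ℝ) < (φ n : ℝ) + 1 := by positivity
        rw [div_lt_iff₀ hpos]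
        have h2δ : 2 / δ < (φ n : ℝ) + 1 := by linarith
        calc (1:ℝ) = (δ/2) * (2/δ) := by field_simp
          _ < (δ/2) * ((φ n : ℝ) + 1) := by
              apply mul_lt_mul_of_pos_left h2δ (by linarith)
      obtain ⟨n, hn1, hn2⟩ := (h1.and h2).exists
      refine hf2 (φ n) ?_
      have ht : dist x (f (φ n)) ≤ dist x ζ + dist ζ (f (φ n)) := dist_triangle _ _ _
      rw [dist_comm ζ (f (φ n))] at ht
      rw [Metric.mem_ball]
      have : dist x ζ = R - δ := by rw [hδdef]; ring
      linarith
  refine ⟨hne, ?_, ?_, fun ζ h => h.1⟩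
  · rw [hSeq]
    exact (isCompact_closedBall p R).inter_right hCclosed
  · rw [hSeq]
    exact (convex_closedBall p R).inter hCconv
end

section
/- Let Ω ⊆ ℂ be an open bounded convex set, p ∈ Ω, and let ζ be the unique point of S_Ω(p) closest to p. If (|ζ−p|² − (r• − δ)²)(r• + δ) ≤ (r• − δ)δ², where r• = r•_Ω(p) and δ = δ_Ω(p), then the Kobayashi metric satisfies κ_Ω(p,1) ≤ r•/(r•² − |ζ−p|²) ≤ 1/δ, with the latter inequality an equality if and only if ζ = p. -/
/-- Kobayashi metric bound on a bounded convex planar domain, first case: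
if `ζ` is the point of `S_Ω(p)` nearest to `p` and
`(|ζ−p|² − (r•−δ)²)(r•+δ) ≤ (r•−δ)δ²`, then
`κ_Ω(p,1) ≤ r•/(r•² − |ζ−p|²) ≤ 1/δ`, the latter an equality iff `ζ = p`. -/
theorem stmt_10 (Ω : Set ℂ) (hΩ : IsOpen Ω) (hbd : Bornology.IsBounded Ω)
    (hconv : Convex ℝ Ω) (p : ℂ) (hp : p ∈ Ω) (ζ : ℂ) (hζ : ζ ∈ Sset Ω p)
    (hnear : dist ζ p = Metric.infDist p (Sset Ω p))
    (hcond : (dist ζ p ^ 2 - (rsup Ω p - Metric.infDist p Ωᶜ) ^ 2) *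
        (rsup Ω p + Metric.infDist p Ωᶜ)
        ≤ (rsup Ω p - Metric.infDist p Ωᶜ) * (Metric.infDist p Ωᶜ) ^ 2) :
    kobayashiMetric Ω p 1 ≤ rsup Ω p / ((rsup Ω p) ^ 2 - dist ζ p ^ 2) ∧
    rsup Ω p / ((rsup Ω p) ^ 2 - dist ζ p ^ 2) ≤ 1 / Metric.infDist p Ωᶜ ∧
    (rsup Ω p / ((rsup Ω p) ^ 2 - dist ζ p ^ 2) = 1 / Metric.infDist p Ωᶜ ↔ ζ = p) := by
  set r := rsup Ω p with hrdef
  set δ := Metric.infDist p Ωᶜ with hδdef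
  set d := dist ζ p with hddef
  -- complement is nonempty
  obtain ⟨C, hC⟩ := hbd.subset_closedBall 0
  have hCnn : (0:ℝ) ≤ C := by
    have := hC hp
    have := Metric.mem_closedBall.mp this
    have := dist_nonneg.trans this
    linarith
  have hcne : Ωᶜ.Nonempty := by
    refine ⟨((C+1 : ℝ) : ℂ), fun h => ?_⟩
    have h2 := Metric.mem_closedBall.mp (hC h)
    rw [dist_zero_right, Complex.norm_real, Real.norm_eq_abs,
      abs_of_nonneg (by linarith : (0:ℝ) ≤ C+1)] at h2
    linarith
  -- if a ball around p lies in Ω, its radius is at most δ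
  have hball_le : ∀ R : ℝ, Metric.ball p R ⊆ Ω → R ≤ δ := by
    intro R hR
    by_contra h
    push_neg at h
    obtain ⟨y, hy, hy'⟩ := (Metric.infDist_lt_iff hcne).mp h
    exact hy (hR (by simpa [Metric.mem_ball, dist_comm] using hy'))
  -- δ > 0
  have hδpos : 0 < δ := by
    obtain ⟨ε, hε, hεsub⟩ := Metric.isOpen_iff.mp hΩ p hp
    exact lt_of_lt_of_le hε (hball_le ε hεsub)
  -- ball p δ ⊆ Ω
  have hballδ : Metric.ball p δ ⊆ Ω := by
    intro x hx
    by_contra hxΩ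
    have := Metric.infDist_le_dist_of_mem (x := p) (Set.mem_compl hxΩ)
    rw [Metric.mem_ball, dist_comm] at hx
    exact absurd (lt_of_le_of_lt this hx) (lt_irrefl _)
  -- the radius set is bounded above
  have hbdd : BddAbove {R : ℝ | 0 < R ∧ ∃ ζ : ℂ, p ∈ Metric.ball ζ R ∧ Metric.ball ζ R ⊆ Ω} := by
    refine ⟨4*C + 4, fun R hR => ?_⟩
    obtain ⟨hRpos, ξ, hξ, hξsub⟩ := hR
    have h1 : ξ ∈ Metric.closedBall (0:ℂ) C := hC (hξsub (Metric.mem_ball_self hRpos))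
    have h2 : ξ + (R/2 : ℝ) ∈ Metric.closedBall (0:ℂ) C := by
      apply hC; apply hξsub
      rw [Metric.mem_ball, dist_eq_norm]
      have : ‖(↑(R/2) : ℂ)‖ = R/2 := by
        rw [Complex.norm_real, Real.norm_eq_abs, abs_of_pos (by linarith : (0:ℝ) < R/2)]
      simp only [add_sub_cancel_left]
      rw [this]; linarith
    have : dist (ξ + (R/2 : ℝ)) ξ ≤ 2*C := by
      calc dist (ξ + (R/2 : ℝ)) ξ ≤ dist (ξ + (R/2 : ℝ)) 0 + dist (0:ℂ) ξ := dist_triangle _ _ _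
        _ ≤ C + C := by
            refine add_le_add (Metric.mem_closedBall.mp h2) ?_
            rw [dist_comm]; exact Metric.mem_closedBall.mp h1
        _ = 2*C := by ring
    have hdx : dist (ξ + (R/2 : ℝ)) ξ = R/2 := by
      rw [dist_eq_norm, add_sub_cancel_left, Complex.norm_real,
        Real.norm_eq_abs, abs_of_pos (by linarith : (0:ℝ) < R/2)]

    rw [hdx] at this
    linarith
  have hδr : δ ≤ r := le_csSup hbdd ⟨hδpos, p, Metric.mem_ball_self hδpos, hballδ⟩
  have hrpos : 0 < r := lt_of_lt_of_le hδpos hδr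
  have hdnn : 0 ≤ d := dist_nonneg
  have key : d^2*(r+δ) ≤ (r-δ)*r^2 := by nlinarith [hcond]
  have hden : 0 < r^2 - d^2 := by
    nlinarith [key, mul_pos hδpos (mul_pos hrpos hrpos), mul_nonneg (mul_nonneg hdnn hdnn) hδpos.le,
      mul_nonneg (mul_nonneg hdnn hdnn) hrpos.le]
  have hdr : d < r := by nlinarith
  refine ⟨?_, ?_, ?_⟩
  · -- Kobayashi bound via the disk D(ζ, r)
    have hsub : Metric.ball ζ r ⊆ Ω := hζ.2.2
    set α : ℂ := (p - ζ) / r with hα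
    have hrC : (r : ℂ) ≠ 0 := by
      simpa using hrpos.ne'
    have hαabs : ‖α‖ = d / r := by
      rw [hα, norm_div, Complex.norm_real, Real.norm_eq_abs, abs_of_pos hrpos, hddef, Complex.dist_eq,
        norm_sub_rev]
    have hα1 : ‖α‖ < 1 := by
      rw [hαabs]; rw [div_lt_one hrpos]; exact hdr
    set c : ℝ := r / (r^2 - d^2) with hc
    have hcpos : 0 < c := div_pos hrpos hden
    set f : ℂ → ℂ := fun z => ζ + (r : ℂ) * ((z + α) / (1 + (starRingEnd ℂ) α * z)) with hf
    have hne : ∀ z ∈ Metric.ball (0:ℂ) 1, (1 + (starRingEnd ℂ) α * z) ≠ 0 := by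
      intro z hz h0
      have hz1 : ‖z‖ < 1 := by simpa [Complex.dist_eq] using hz
      have : ‖(starRingEnd ℂ) α * z‖ < 1 := by
        rw [norm_mul, Complex.norm_conj]
        calc ‖α‖ * ‖z‖ ≤ 1 * ‖z‖ := by
              exact mul_le_mul_of_nonneg_right hα1.le (norm_nonneg _)
          _ < 1 := by simpa using hz1
      have h1 : (starRingEnd ℂ) α * z = -1 := by linear_combination h0
      rw [h1] at this
      simp at this
    have hdiff : DifferentiableOn ℂ f (Metric.ball (0:ℂ) 1) := by
      apply DifferentiableOn.const_add
      apply DifferentiableOn.const_mul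
      exact DifferentiableOn.div
        ((differentiable_id.add_const α).differentiableOn)
        (((differentiable_const (1:ℂ)).add ((differentiable_id).const_mul _)).differentiableOn)
        hne
    have hmaps : Set.MapsTo f (Metric.ball (0:ℂ) 1) Ω := by
      intro z hz
      apply hsub
      have hz1 : ‖z‖ < 1 := by simpa [Complex.dist_eq] using hz
      have hzsq : Complex.normSq z < 1 := by
        rw [← Complex.sq_norm] at *; nlinarith [norm_nonneg z]
      have hαsq : Complex.normSq α < 1 := by
        rw [← Complex.sq_norm] at *; nlinarith [norm_nonneg α]
      have expand : Complex.normSq (1 + (starRingEnd ℂ) α * z) - Complex.normSq (z + α)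
          = (1 - Complex.normSq α) * (1 - Complex.normSq z) := by
        simp only [Complex.normSq_apply, Complex.add_re, Complex.add_im, Complex.mul_re,
          Complex.mul_im, Complex.conj_re, Complex.conj_im, Complex.one_re, Complex.one_im]
        ring
      have hlt : Complex.normSq (z + α) < Complex.normSq (1 + (starRingEnd ℂ) α * z) := by
        nlinarith
      have habs : ‖z + α‖ < ‖1 + (starRingEnd ℂ) α * z‖ := by
        rw [Complex.norm_def, Complex.norm_def]
        exact Real.sqrt_lt_sqrt (Complex.normSq_nonneg _) hlt
      have hpos : 0 < ‖1 + (starRingEnd ℂ) α * z‖ :=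
        lt_of_le_of_lt (norm_nonneg _) habs
      rw [Metric.mem_ball, Complex.dist_eq]
      have : f z - ζ = (r : ℂ) * ((z + α) / (1 + (starRingEnd ℂ) α * z)) := by
        rw [hf]; ring
      rw [this, norm_mul, norm_div, Complex.norm_real, Real.norm_eq_abs, abs_of_pos hrpos]
      calc r * (‖z + α‖ / ‖1 + (starRingEnd ℂ) α * z‖)
          < r * 1 := by
            apply mul_lt_mul_of_pos_left _ hrpos
            rw [div_lt_one hpos]; exact habs
        _ = r := mul_one r
    have hf0 : f 0 = p := by
      rw [hf]
      simp only [zero_add, mul_zero, add_zero, div_one]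
      rw [hα]
      field_simp
      ring
    have hderiv : deriv f 0 = c⁻¹ • (1 : ℂ) := by
      have hnum : HasDerivAt (fun z : ℂ => z + α) 1 0 := (hasDerivAt_id 0).add_const α
      have hden2 : HasDerivAt (fun z : ℂ => 1 + (starRingEnd ℂ) α * z) ((starRingEnd ℂ) α) 0 := by
        simpa using (((hasDerivAt_id (0:ℂ)).const_mul ((starRingEnd ℂ) α)).const_add 1)
      have hd0 : (1 + (starRingEnd ℂ) α * (0:ℂ)) ≠ 0 := by simp
      have hq := hnum.div hden2 hd0
      have hfd := (hq.const_mul (r : ℂ)).const_add ζ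
      have : deriv f 0 = (r:ℂ) * ((1 * (1 + (starRingEnd ℂ) α * 0) - (0 + α) * (starRingEnd ℂ) α)
          / (1 + (starRingEnd ℂ) α * 0) ^ 2) := hfd.deriv
      rw [this]
      have hms : α * (starRingEnd ℂ) α = ((d^2/r^2 : ℝ) : ℂ) := by
        rw [Complex.mul_conj, Complex.normSq_eq_norm_sq, hαabs]
        push_cast
        ring
      have hsmul : c⁻¹ • (1 : ℂ) = ((c⁻¹ : ℝ) : ℂ) := by
        rw [Complex.real_smul, mul_one]
      rw [hsmul]
      have hcinv : c⁻¹ = r * (1 - d^2/r^2) := by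
        rw [hc, inv_div]
        field_simp
      rw [hcinv]
      simp only [mul_zero, add_zero, zero_add, one_mul, one_pow, div_one]
      rw [hms]
      push_cast
      ring
    have hmem : c ∈ { c : ℝ | 0 < c ∧ ∃ g : ℂ → ℂ,
        DifferentiableOn ℂ g (Metric.ball (0:ℂ) 1) ∧
        Set.MapsTo g (Metric.ball (0:ℂ) 1) Ω ∧ g 0 = p ∧ deriv g 0 = c⁻¹ • 1 } :=
      ⟨hcpos, f, hdiff, hmaps, hf0, hderiv⟩
    have hbb : BddBelow { c : ℝ | 0 < c ∧ ∃ g : ℂ → ℂ,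
        DifferentiableOn ℂ g (Metric.ball (0:ℂ) 1) ∧
        Set.MapsTo g (Metric.ball (0:ℂ) 1) Ω ∧ g 0 = p ∧ deriv g 0 = c⁻¹ • 1 } :=
      ⟨0, fun x hx => hx.1.le⟩
    exact csInf_le hbb hmem
  · rw [div_le_div_iff₀ hden hδpos]
    nlinarith
  · constructor
    · intro h
      rw [div_eq_div_iff hden.ne' hδpos.ne'] at h
      have hrδ : r = δ := by nlinarith
      have hd0 : d = 0 := by nlinarith
      exact dist_eq_zero.mp hd0
    · intro h
      subst h
      have hrδ : r ≤ δ := hball_le r hζ.2.2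
      have : r = δ := le_antisymm hrδ hδr
      rw [hddef, dist_self, ← this]
      rw [show (0:ℝ)^2 = 0 by ring, sub_zero, sq]
      field_simp
end

section
/- Let Ω ⊆ ℂ be an open bounded convex set, p ∈ Ω, and let ζ be the unique point of S_Ω(p) closest to p. Write α = |ζ−p|, β = r•_Ω(p) − δ_Ω(p), δ = δ_Ω(p). If (α² − β²)(r•_Ω(p) + δ) > βδ², then κ_Ω(p,1) ≤ (1/(2δ))·β²/(α(α − √(α²−β²))) < 1/δ. -/
section Aux

lemma aux_normSq (a z : ℂ) :
    Complex.normSq (1 + (starRingEnd ℂ) a * z) - Complex.normSq (a + z)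
      = (1 - Complex.normSq a) * (1 - Complex.normSq z) := by
  simp [Complex.normSq_apply, Complex.add_re, Complex.add_im, Complex.mul_re, Complex.mul_im,
    Complex.conj_re, Complex.conj_im]
  ring

lemma aux_lt (a z : ℂ) (ha : ‖a‖ < 1) (hz : ‖z‖ < 1) :
    ‖a + z‖ < ‖1 + (starRingEnd ℂ) a * z‖ := by
  have h1 : Complex.normSq a < 1 := by
    have := Complex.sq_norm a; nlinarith [norm_nonneg a]
  have h2 : Complex.normSq z < 1 := by
    have := Complex.sq_norm z; nlinarith [norm_nonneg z]
  have key := aux_normSq a z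
  have hlt : Complex.normSq (a + z) < Complex.normSq (1 + (starRingEnd ℂ) a * z) := by
    nlinarith
  refine lt_of_pow_lt_pow_left₀ 2 (norm_nonneg _) ?_
  rw [Complex.sq_norm, Complex.sq_norm]; exact hlt

/-- The extremal holomorphic disk into a round disk `ball c₀ ρ ⊆ Ω`. -/
lemma aux_schwarz (c₀ : ℂ) (ρ : ℝ) (hρ : 0 < ρ) (a : ℂ) (ha : ‖a‖ < 1)
    (Ω : Set ℂ) (hsub : Metric.ball c₀ ρ ⊆ Ω) :
    ∃ f : ℂ → ℂ, DifferentiableOn ℂ f (Metric.ball 0 1) ∧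
      Set.MapsTo f (Metric.ball 0 1) Ω ∧ f 0 = c₀ + (ρ : ℂ) * a ∧
      deriv f 0 = ((ρ * (1 - ‖a‖ ^ 2) : ℝ) : ℂ) := by
  set b : ℂ := (starRingEnd ℂ) a with hb
  refine ⟨fun z => c₀ + (ρ : ℂ) * ((a + z) / (1 + b * z)), ?_, ?_, ?_, ?_⟩
  · intro z hz
    have hz1 : ‖z‖ < 1 := by simpa [Complex.dist_eq] using hz
    have hden : (1 + b * z) ≠ 0 := by
      intro h
      have := aux_lt a z ha hz1
      rw [h] at this
      simp at this
      exact absurd this (not_lt.2 (norm_nonneg _))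
    exact (((differentiableAt_const a).add differentiableAt_id).div
      ((differentiableAt_const 1).add ((differentiableAt_const b).mul differentiableAt_id))
      hden).const_mul ((ρ:ℂ)) |>.const_add c₀ |>.differentiableWithinAt
  · intro z hz
    have hz1 : ‖z‖ < 1 := by simpa [Complex.dist_eq] using hz
    have hlt := aux_lt a z ha hz1
    have hdenpos : 0 < ‖1 + b * z‖ :=
      lt_of_le_of_lt (norm_nonneg _) hlt
    apply hsub
    rw [Metric.mem_ball, Complex.dist_eq]
    have : c₀ + (ρ:ℂ) * ((a + z) / (1 + b * z)) - c₀ = (ρ:ℂ) * ((a + z) / (1 + b * z)) := by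
      ring
    rw [this, norm_mul, norm_div, Complex.norm_real, Real.norm_eq_abs, abs_of_pos hρ]
    calc ρ * (‖a + z‖ / ‖1 + b * z‖) < ρ * 1 := by
          apply mul_lt_mul_of_pos_left _ hρ
          exact (div_lt_one hdenpos).2 hlt
      _ = ρ := mul_one ρ
  · simp
  · have h1 : HasDerivAt (fun z : ℂ => a + z) 1 0 := by
      simpa using (hasDerivAt_id (0:ℂ)).const_add a
    have h2 : HasDerivAt (fun z : ℂ => 1 + b * z) b 0 := by
      simpa using ((hasDerivAt_id (0:ℂ)).const_mul b).const_add (1:ℂ)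
    have hden0 : (1 + b * (0:ℂ)) ≠ 0 := by simp
    have hq := h1.div h2 hden0
    have hf := (hq.const_mul ((ρ:ℂ))).const_add c₀
    rw [HasDerivAt.deriv (f := fun z : ℂ => c₀ + (ρ:ℂ) * ((a + z) / (1 + b * z))) hf]
    have hab : a * b = (Complex.normSq a : ℂ) := by rw [hb, Complex.mul_conj]
    rw [show (1 * (1 + b * 0) - (a + 0) * b) / (1 + b * 0) ^ 2 = 1 - a * b by field_simp; ring]
    rw [hab, Complex.normSq_eq_norm_sq]
    push_cast
    ring

/-- All the real arithmetic needed, isolated in a small context. -/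
lemma aux_arith (α β δ r t : ℝ) (hδpos : 0 < δ) (hβpos : 0 < β) (hαnn : 0 ≤ α)
    (hrr : r = δ + β) (ht : t = Real.sqrt (α^2 - β^2))
    (hcond : (α ^ 2 - β ^ 2) * (r + δ) > β * δ ^ 2) :
    β < α ∧ 0 < t ∧ t < α ∧ t^2 = α^2 - β^2 ∧ β^2 = (α-t)*(α+t) ∧
      α*δ < r*t ∧ β*δ ≤ t*(α+t) := by
  have hα2 : β^2 < α^2 := by nlinarith
  have hβα : β < α := by nlinarith
  have ht2 : t^2 = α^2 - β^2 := by rw [ht]; exact Real.sq_sqrt (by nlinarith)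
  have htpos : 0 < t := by rw [ht]; exact Real.sqrt_pos.2 (by nlinarith)
  have htα : t < α := by nlinarith
  have hβ2 : β^2 = (α-t)*(α+t) := by nlinarith
  have hkey : α*δ < r*t := by
    have hc2 : 0 < β*((α^2-β^2)*(r+δ) - β*δ^2) := mul_pos hβpos (by linarith)
    have hid : r^2*t^2 - α^2*δ^2 = β*((α^2-β^2)*(r+δ) - β*δ^2) := by
      rw [ht2, hrr]; ring
    have hP : α^2 * δ^2 < r^2 * t^2 := by nlinarith
    nlinarith [mul_pos (show (0:ℝ) < r by linarith) htpos,
      mul_pos (show (0:ℝ) < α by linarith) hδpos]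
  have hw2 : β * δ ≤ t * (α + t) := by
    have h1 : δ*(α - t) < β*t := by nlinarith
    have h2 : δ*(α-t)*(α+t) < β*t*(α+t) :=
      mul_lt_mul_of_pos_right h1 (by linarith)
    have h3 : β*(δ*β) < β*(t*(α+t)) := by nlinarith
    have h4 := lt_of_mul_lt_mul_left h3 (le_of_lt hβpos)
    linarith
  exact ⟨hβα, htpos, htα, ht2, hβ2, hkey, hw2⟩

/-- The value identities, isolated in a small context. -/
lemma aux_val (α β δ t : ℝ) (hδpos : 0 < δ) (hβpos : 0 < β) (htpos : 0 < t) (htα : t < α)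
    (hβ2 : β^2 = (α-t)*(α+t)) :
    (1/(2*δ)) * (β^2/(α*(α - t))) = ((α*δ/t) * (1 - (β/(α+t))^2))⁻¹ ∧
    (1/(2*δ)) * (β^2/(α*(α - t))) < 1/δ := by
  have hαpos : 0 < α := lt_trans htpos htα
  have hαt : (0:ℝ) < α - t := by linarith
  have hK : (α*δ/t) * (1 - (β/(α+t))^2) = 2*α*δ/(α+t) := by
    rw [div_pow, hβ2]
    field_simp
    ring
  constructor
  · rw [hK, hβ2]
    field_simp
  · have h1 : (1/(2*δ)) * (β^2/(α*(α - t))) = (α+t)/(2*α*δ) := by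
      rw [hβ2]
      field_simp
    rw [h1, div_lt_div_iff₀ (by positivity) hδpos]
    nlinarith

end Aux

set_option maxHeartbeats 1600000

/-- Kobayashi metric bound on a bounded convex planar domain, second case:
with `α = |ζ−p|`, `β = r•_Ω(p) − δ_Ω(p)`, `δ = δ_Ω(p)`, if `(α²−β²)(r•+δ) > βδ²`
then `κ_Ω(p,1) ≤ (1/(2δ))·β²/(α(α−√(α²−β²))) < 1/δ`. -/
theorem stmt_11 (Ω : Set ℂ) (hΩ : IsOpen Ω) (hbd : Bornology.IsBounded Ω)
    (hconv : Convex ℝ Ω) (p : ℂ) (hp : p ∈ Ω) (ζ : ℂ) (hζ : ζ ∈ Sset Ω p)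
    (hnear : dist ζ p = Metric.infDist p (Sset Ω p))
    (α β δ : ℝ) (hα : α = dist ζ p) (hβ : β = rsup Ω p - Metric.infDist p Ωᶜ)
    (hδ : δ = Metric.infDist p Ωᶜ)
    (hcond : (α ^ 2 - β ^ 2) * (rsup Ω p + δ) > β * δ ^ 2) :
    kobayashiMetric Ω p 1 ≤ (1 / (2 * δ)) * (β ^ 2 / (α * (α - Real.sqrt (α ^ 2 - β ^ 2)))) ∧
    (1 / (2 * δ)) * (β ^ 2 / (α * (α - Real.sqrt (α ^ 2 - β ^ 2)))) < 1 / δ := by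
  classical
  set r : ℝ := rsup Ω p with hrdef
  obtain ⟨hζΩ, hζcl, hζball⟩ := hζ
  obtain ⟨R, hR⟩ := hbd.subset_closedBall (0:ℂ)
  have hRnn : 0 ≤ R := le_trans dist_nonneg (hR hp)
  have hne : Ωᶜ.Nonempty := by
    refine ⟨((R+1 : ℝ) : ℂ), fun hmem => ?_⟩
    have h1 := hR hmem
    rw [Metric.mem_closedBall, Complex.dist_eq] at h1
    simp only [sub_zero, Complex.norm_real, Real.norm_eq_abs] at h1
    rw [abs_of_nonneg (by linarith)] at h1
    linarith
  have hδpos : 0 < δ := by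
    rw [hδ]
    exact (hΩ.isClosed_compl.notMem_iff_infDist_pos hne).1 (by simpa using hp)
  have hballδ : Metric.ball p δ ⊆ Ω := by
    intro x hx
    by_contra hxΩ
    have h1 : Metric.infDist p Ωᶜ ≤ dist p x := Metric.infDist_le_dist_of_mem hxΩ
    rw [Metric.mem_ball, dist_comm] at hx
    rw [← hδ] at h1
    linarith
  have hbdd : BddAbove {r' : ℝ | 0 < r' ∧ ∃ ζ' : ℂ, p ∈ Metric.ball ζ' r' ∧ Metric.ball ζ' r' ⊆ Ω} := by
    refine ⟨4*R, ?_⟩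
    rintro r' ⟨hr'pos, ζ', _, hsub'⟩
    have h1 : ζ' ∈ Ω := hsub' (Metric.mem_ball_self hr'pos)
    have h2 : (ζ' + ((r'/2 : ℝ) : ℂ)) ∈ Ω := by
      apply hsub'
      rw [Metric.mem_ball, Complex.dist_eq]
      simp only [add_sub_cancel_left, Complex.norm_real, Real.norm_eq_abs]
      rw [abs_of_pos (by linarith)]
      linarith
    have d1 := hR h1
    have d2 := hR h2
    rw [Metric.mem_closedBall] at d1 d2
    have h3 : dist (ζ' + ((r'/2 : ℝ) : ℂ)) ζ' ≤ 2*R := by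
      calc dist (ζ' + ((r'/2 : ℝ) : ℂ)) ζ' ≤ dist (ζ' + ((r'/2 : ℝ) : ℂ)) 0 + dist 0 ζ' :=
            dist_triangle _ _ _
        _ ≤ 2*R := by rw [dist_comm (0:ℂ) ζ']; linarith
    rw [Complex.dist_eq] at h3
    simp only [add_sub_cancel_left, Complex.norm_real, Real.norm_eq_abs] at h3
    rw [abs_of_pos (by linarith)] at h3
    linarith
  have hrge : δ ≤ r := le_csSup hbdd ⟨hδpos, p, Metric.mem_ball_self hδpos, hballδ⟩
  have hβr : β = r - δ := by rw [hβ, ← hδ]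
  have hβnn : 0 ≤ β := by linarith
  have hrr : r = δ + β := by linarith
  have hβpos : 0 < β := by
    rcases eq_or_lt_of_le hβnn with h0 | h; swap
    · exact h
    exfalso
    have hrδ : r = δ := by linarith
    have hrpos' : 0 < r := by linarith
    have hpS : p ∈ Sset Ω p := by
      refine ⟨hp, subset_closure (Metric.mem_ball_self hrpos'), ?_⟩
      rw [← hrdef, hrδ]; exact hballδ
    have h0' : Metric.infDist p (Sset Ω p) = 0 :=
      le_antisymm (by simpa using Metric.infDist_le_dist_of_mem (x := p) hpS)
        Metric.infDist_nonneg
    have hζp : dist ζ p = 0 := by rw [hnear, h0']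
    have hα0 : α = 0 := by rw [hα, hζp]
    rw [hα0, ← h0] at hcond
    norm_num at hcond
  have hαnn : 0 ≤ α := hα ▸ dist_nonneg
  have hrpos : 0 < r := lt_of_lt_of_le hδpos hrge
  obtain ⟨hβα, htpos, htα, ht2, hβ2, hkey, hw2⟩ :=
    aux_arith α β δ r (Real.sqrt (α^2 - β^2)) hδpos hβpos hαnn hrr rfl hcond
  set t : ℝ := Real.sqrt (α^2 - β^2) with htdef
  have hαpos : 0 < α := lt_trans hβpos hβα
  set ρ : ℝ := α*δ/t with hρdef
  have hρpos : 0 < ρ := by positivity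
  have hρne : ρ ≠ 0 := ne_of_gt hρpos
  set aR : ℝ := β/(α+t) with haRdef
  have haRpos : 0 < aR := by positivity
  have haR1 : aR < 1 := by
    rw [haRdef, div_lt_one (by positivity)]; linarith
  set w : ℝ := β*δ/(t*(α+t)) with hwdef
  have hw0 : 0 ≤ w := by positivity
  have hw1 : w ≤ 1 := by
    rw [hwdef, div_le_one (by positivity)]; linarith [hw2]
  have hwρ : w*r + (1-w)*δ = ρ := by
    have hdiff : w*r + (1-w)*δ - ρ = δ*(β^2 + t^2 - α^2)/(t*(α+t)) := by
      rw [hwdef, hρdef, hrr]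
      field_simp
      ring
    have h0 : β^2 + t^2 - α^2 = 0 := by linarith [ht2]
    rw [h0] at hdiff
    simp at hdiff
    linarith
  have hwα : ρ*aR*α⁻¹ = w := by
    rw [hρdef, haRdef, hwdef]
    field_simp
  have hdistζp : ‖p - ζ‖ = α := by
    rw [hα, dist_comm, Complex.dist_eq]
  set u : ℂ := ((α⁻¹ : ℝ) : ℂ) * (p - ζ) with hudef
  have hu1 : ‖u‖ = 1 := by
    rw [hudef, norm_mul, Complex.norm_real, Real.norm_eq_abs, hdistζp, abs_of_pos (by positivity)]
    field_simp
  set a : ℂ := ((aR : ℝ) : ℂ) * u with hadef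
  have ha : ‖a‖ = aR := by
    rw [hadef, norm_mul, Complex.norm_real, Real.norm_eq_abs, hu1, abs_of_pos haRpos, mul_one]
  set c₀ : ℂ := p - ((ρ * aR : ℝ) : ℂ) * u with hc₀def
  have hc₀c : c₀ = ((w:ℝ):ℂ) * ζ + ((1-w:ℝ):ℂ) * p := by
    rw [hc₀def, hudef]
    push_cast [← hwα]
    have hαne : (α:ℂ) ≠ 0 := by exact_mod_cast ne_of_gt hαpos
    field_simp
    ring
  -- ball inclusion via convexity
  have hballsub : Metric.ball c₀ ρ ⊆ Ω := by
    intro x hx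
    rw [Metric.mem_ball, dist_eq_norm] at hx
    set v : ℂ := x - c₀ with hvdef
    have hyΩ : ζ + ((r/ρ : ℝ) : ℂ) * v ∈ Ω := by
      apply hζball
      rw [← hrdef, Metric.mem_ball, dist_eq_norm]
      simp only [add_sub_cancel_left]
      rw [norm_mul, Complex.norm_real, Real.norm_eq_abs, abs_of_pos (by positivity)]
      calc r/ρ * ‖v‖ < r/ρ * ρ := by
            apply mul_lt_mul_of_pos_left hx (by positivity)
        _ = r := by field_simp
    have hzΩ : p + ((δ/ρ : ℝ) : ℂ) * v ∈ Ω := by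
      apply hballδ
      rw [Metric.mem_ball, dist_eq_norm]
      simp only [add_sub_cancel_left]
      rw [norm_mul, Complex.norm_real, Real.norm_eq_abs, abs_of_pos (by positivity)]
      calc δ/ρ * ‖v‖ < δ/ρ * ρ := by
            apply mul_lt_mul_of_pos_left hx (by positivity)
        _ = δ := by field_simp
    have hco : w*(r/ρ) + (1-w)*(δ/ρ) = 1 := by
      field_simp
      linarith [hwρ]
    have hcoc : ((w:ℝ):ℂ)*(((r/ρ):ℝ):ℂ) + ((1-w:ℝ):ℂ)*(((δ/ρ):ℝ):ℂ) = 1 := by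
      exact_mod_cast congrArg (fun y : ℝ => ((y:ℝ):ℂ)) hco
    have hx' : x = w • (ζ + ((r/ρ : ℝ) : ℂ) * v) + (1-w) • (p + ((δ/ρ : ℝ) : ℂ) * v) := by
      rw [Complex.real_smul, Complex.real_smul]
      have hxv : x = c₀ + v := by rw [hvdef]; ring
      rw [hxv, hc₀c]
      push_cast at hcoc ⊢
      linear_combination (-v) * hcoc
    rw [hx']
    exact hconv hyΩ hzΩ hw0 (by linarith) (by ring)
  obtain ⟨f, hfd, hfm, hf0, hfderiv⟩ :=
    aux_schwarz c₀ ρ hρpos a (by rw [ha]; exact haR1) Ω hballsub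
  have hf0p : f 0 = p := by
    rw [hf0, hc₀def, hadef]
    push_cast
    ring
  set K : ℝ := ρ * (1 - aR^2) with hKdef
  have hKpos : 0 < K := by
    rw [hKdef]
    apply mul_pos hρpos
    nlinarith [haRpos, haR1]
  have hderiv' : deriv f 0 = ((K:ℝ):ℂ) := by rw [hfderiv, ha]
  have hmem : K⁻¹ ∈ { c : ℝ | 0 < c ∧ ∃ f : ℂ → ℂ, DifferentiableOn ℂ f (Metric.ball (0:ℂ) 1) ∧
      Set.MapsTo f (Metric.ball (0:ℂ) 1) Ω ∧ f 0 = p ∧ deriv f 0 = c⁻¹ • (1:ℂ) } := by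
    refine ⟨inv_pos.2 hKpos, f, hfd, hfm, hf0p, ?_⟩
    rw [inv_inv, hderiv', Complex.real_smul, mul_one]
  have hbb : BddBelow { c : ℝ | 0 < c ∧ ∃ f : ℂ → ℂ, DifferentiableOn ℂ f (Metric.ball (0:ℂ) 1) ∧
      Set.MapsTo f (Metric.ball (0:ℂ) 1) Ω ∧ f 0 = p ∧ deriv f 0 = c⁻¹ • (1:ℂ) } :=
    ⟨0, fun x hx => le_of_lt hx.1⟩
  have hK1 : kobayashiMetric Ω p 1 ≤ K⁻¹ := csInf_le hbb hmem
  obtain ⟨hval1, hval2⟩ := aux_val α β δ t hδpos hβpos htpos htα hβ2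
  constructor
  · rw [hval1]
    rw [hKdef, hρdef, haRdef] at hK1
    exact hK1
  · exact hval2
end

section
/- Let D₁ ⊆ ℂⁿ be a bounded convex domain and D₂ ⊆ ℂᵐ a convex domain. Fix a ∈ D₁ and b ∈ D₂. Then there exist constants α ≥ 1 (depending only on D₁) and C > 0 (depending only on D₁ and a) such that for every holomorphic map φ : D₁ → D₂ with φ(a) = b and every r > 0: dist(φ({z ∈ D₁ : dist(z, D₁ᶜ) ≥ r}), D₂ᶜ) ≥ C·dist(b, D₂ᶜ)·r^α. -/
open Metric Complex Set

private lemma halfplane_abs_lt {w w₀ : ℂ} {c : ℝ} (hw : w.re < c) (hw₀ : w₀.re < c) :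
    ‖w - w₀‖ < ‖w + (starRingEnd ℂ) w₀ - ((2*c : ℝ) : ℂ)‖ := by
  have h1 : ‖w - w₀‖ ^ 2 < ‖w + (starRingEnd ℂ) w₀ - ((2*c:ℝ):ℂ)‖ ^ 2 := by
    rw [Complex.sq_norm, Complex.sq_norm]
    simp only [Complex.normSq_apply, Complex.sub_re, Complex.sub_im, Complex.add_re,
      Complex.add_im, Complex.conj_re, Complex.conj_im, Complex.ofReal_re, Complex.ofReal_im]
    nlinarith [mul_pos (sub_pos.2 hw) (sub_pos.2 hw₀)]
  exact lt_of_pow_lt_pow_left₀ 2 (norm_nonneg _) h1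

private lemma harnack_step {E : Type*} [NormedAddCommGroup E] [NormedSpace ℂ E]
    {g : E → ℂ} {p : E} {δ c : ℝ} (hδ : 0 < δ)
    (hg : DifferentiableOn ℂ g (Metric.ball p δ))
    (hlt : ∀ y ∈ Metric.ball p δ, (g y).re < c)
    {x : E} (hx : dist x p ≤ δ / 4) :
    (c - (g p).re) / 3 ≤ c - (g x).re := by
  have hp : p ∈ ball p δ := mem_ball_self hδ
  have hd₀ : 0 < c - (g p).re := sub_pos.2 (hlt p hp)
  rcases eq_or_ne x p with rfl | hxp
  · linarith
  set w₀ := g p with hw₀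
  set F : ℂ → ℂ := fun w => (w - w₀) / (w + (starRingEnd ℂ) w₀ - ((2*c:ℝ):ℂ)) with hF
  have hden : ∀ w : ℂ, w.re < c → w + (starRingEnd ℂ) w₀ - ((2*c:ℝ):ℂ) ≠ 0 := by
    intro w hwre h
    have := congrArg Complex.re h
    simp only [Complex.sub_re, Complex.add_re, Complex.conj_re, Complex.ofReal_re,
      Complex.zero_re] at this
    have hw0 : w₀.re < c := hlt p hp
    linarith
  have key : ∀ w : ℂ, w.re < c → ‖F w‖ < 1 := by
    intro w hwre
    rw [hF]
    simp only [norm_div]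
    rw [div_lt_one (by
      have := hden w hwre
      exact norm_pos_iff.2 this)]
    exact halfplane_abs_lt hwre (hlt p hp)
  -- line setup
  set d := dist x p with hd
  have hdpos : 0 < d := dist_pos.2 hxp
  set T := δ / d with hT
  have hT4 : 4 ≤ T := by
    rw [hT, le_div_iff₀ hdpos]; linarith
  set L : ℂ → E := fun t => p + t • (x - p) with hL
  have hLmem : ∀ t : ℂ, t ∈ ball (0:ℂ) T → L t ∈ ball p δ := by
    intro t ht
    rw [mem_ball_iff_norm]
    rw [mem_ball_iff_norm, sub_zero] at ht
    have : ‖L t - p‖ = ‖t‖ * d := by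
      rw [hL]; simp only [add_sub_cancel_left, norm_smul]
      rw [hd, dist_eq_norm]
    rw [this]
    calc ‖t‖ * d < T * d := by exact mul_lt_mul_of_pos_right ht hdpos
    _ = δ := by rw [hT]; field_simp
  set ψ : ℂ → ℂ := fun t => F (g (L t)) with hψ
  have hψdiff : DifferentiableOn ℂ ψ (ball (0:ℂ) T) := by
    intro t ht
    apply DifferentiableAt.differentiableWithinAt
    have hLd : DifferentiableAt ℂ L t := by
      apply DifferentiableAt.const_add
      exact differentiableAt_id.smul_const (x - p)
    have hgd : DifferentiableAt ℂ g (L t) :=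
      (hg _ (hLmem t ht)).differentiableAt (isOpen_ball.mem_nhds (hLmem t ht))
    have hFd : DifferentiableAt ℂ F (g (L t)) := by
      apply DifferentiableAt.div
      · fun_prop
      · fun_prop
      · exact hden _ (hlt _ (hLmem t ht))
    exact hFd.comp t (hgd.comp t hLd)
  have hψ0 : ψ 0 = 0 := by
    rw [hψ]; simp only [hL, zero_smul, add_zero, hF, ← hw₀, sub_self, zero_div]
  have hmaps : MapsTo ψ (ball (0:ℂ) T) (ball (ψ 0) 1) := by
    rw [hψ0]
    intro t ht
    rw [mem_ball, dist_zero_right]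
    exact key _ (hlt _ (hLmem t ht))
  have h1mem : (1:ℂ) ∈ ball (0:ℂ) T := by
    rw [mem_ball, dist_zero_right, norm_one]; linarith
  have hSch := Complex.dist_le_div_mul_dist_of_mapsTo_ball hψdiff (hmaps.mono_right ball_subset_closedBall) h1mem
  have hψ1 : ψ 1 = F (g x) := by
    rw [hψ, hL]; simp only [one_smul, add_sub_cancel]
  have habs : ‖F (g x)‖ ≤ 1/4 := by
    rw [← hψ1]
    calc ‖ψ 1‖ = dist (ψ 1) (ψ 0) := by rw [hψ0, dist_zero_right]
    _ ≤ 1 / T * dist (1:ℂ) 0 := hSch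
    _ = 1 / T := by rw [dist_zero_right, norm_one, mul_one]
    _ ≤ 1/4 := by
        apply div_le_div_of_nonneg_left (by norm_num) (by norm_num) hT4
  -- algebra
  set w := g x with hwdef
  have hxball : x ∈ ball p δ := by rw [mem_ball, hd] at *; linarith
  have hwre : w.re < c := hlt x hxball
  have hdenpos : 0 < ‖w + (starRingEnd ℂ) w₀ - ((2*c:ℝ):ℂ)‖ :=
    norm_pos_iff.2 (hden w hwre)
  have habs2 : ‖w - w₀‖ ≤ (1/4) * ‖w + (starRingEnd ℂ) w₀ - ((2*c:ℝ):ℂ)‖ := by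
    have : ‖F w‖ ≤ 1/4 := habs
    rw [hF] at this
    simp only [norm_div] at this
    rw [div_le_iff₀ hdenpos] at this
    linarith
  have htri : ‖w + (starRingEnd ℂ) w₀ - ((2*c:ℝ):ℂ)‖ ≤
      ‖w - w₀‖ + ‖w₀ + (starRingEnd ℂ) w₀ - ((2*c:ℝ):ℂ)‖ := by
    have : w + (starRingEnd ℂ) w₀ - ((2*c:ℝ):ℂ) =
        (w - w₀) + (w₀ + (starRingEnd ℂ) w₀ - ((2*c:ℝ):ℂ)) := by ring
    rw [this]
    exact norm_add_le _ _
  have hrealpart : ‖w₀ + (starRingEnd ℂ) w₀ - ((2*c:ℝ):ℂ)‖ = 2*c - 2*w₀.re := by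
    rw [Complex.add_conj]
    rw [show ((2*w₀.re : ℝ):ℂ) - ((2*c:ℝ):ℂ) = ((2*w₀.re - 2*c : ℝ):ℂ) by push_cast; ring]
    rw [Complex.norm_real, Real.norm_eq_abs, abs_of_nonpos (by linarith)]
    ring
  have hrele : w.re - w₀.re ≤ ‖w - w₀‖ := by
    have h1 := Complex.abs_re_le_norm (w - w₀)
    have h2 : (w - w₀).re = w.re - w₀.re := Complex.sub_re w w₀
    have h3 := le_abs_self (w - w₀).re
    rw [h2] at h1 h3
    linarith [abs_le.1 (le_refl |w.re - w₀.re|)]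
  have hA : ‖w - w₀‖ ≤ (2/3) * (c - w₀.re) := by
    rw [hrealpart] at htri
    linarith
  linarith


private noncomputable def chainSeq (ρ r M : ℝ) : ℕ → ℝ
  | 0 => 0
  | k+1 => min 1 (chainSeq ρ r M k +
      ((1 - chainSeq ρ r M k)*ρ + (chainSeq ρ r M k)*r)/(4*M))

section chain

variable {E : Type*} [NormedAddCommGroup E] [NormedSpace ℂ E] [NormedSpace ℝ E]
  [IsScalarTower ℝ ℂ E]


set_option maxHeartbeats 1000000 in
private lemma chain_bound (D₁ : Set E)
    {a z : E} {ρ r R : ℝ} (hρ : 0 < ρ) (hr : 0 < r) (hR : 0 < R)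
    (hza : ‖z - a‖ ≤ R) (hρR : ρ ≤ R) (hr2R : r ≤ 2*R)
    (hfam : ∀ s : ℝ, 0 ≤ s → s ≤ 1 →
      Metric.ball (a + s • (z - a)) ((1-s)*ρ + s*r) ⊆ D₁)
    {g : E → ℂ} (hg : DifferentiableOn ℂ g D₁) {c : ℝ}
    (hlt : ∀ y ∈ D₁, (g y).re < c)
    (N : ℕ) (hN : (1 - ρ/(4*R))^N ≤ r/(8*R)) :
    (c - (g a).re) / 3^(N+1) ≤ c - (g z).re := by
  set q : ℝ := 1 - ρ/(4*R) with hqdef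
  have hq14 : ρ/(4*R) ≤ 1/4 := by
    rw [div_le_div_iff₀ (by linarith) (by norm_num)]; linarith
  have hq0 : 0 < q := by simp only [hqdef]; linarith
  set M : ℝ := max ‖z - a‖ ρ with hMdef
  have hM0 : 0 < M := lt_of_lt_of_le hρ (le_max_right _ _)
  have hMR : M ≤ R := max_le hza hρR
  have hzaM : ‖z - a‖ ≤ M := le_max_left _ _
  set s : ℕ → ℝ := chainSeq ρ r M with hsdef
  -- positivity of the radii
  have hδpos : ∀ t : ℝ, 0 ≤ t → t ≤ 1 → 0 < (1-t)*ρ + t*r := by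
    intro t h0 h1
    rcases le_or_gt t (1/2) with h | h
    · nlinarith
    · nlinarith
  -- main induction
  have hchain : ∀ k : ℕ, 0 ≤ s k ∧ s k ≤ 1 ∧ 1 - s k ≤ q^k ∧
      (c - (g a).re) / 3^k ≤ c - (g (a + (s k) • (z - a))).re := by
    intro k
    induction k with
    | zero =>
      refine ⟨?_, ?_, ?_, ?_⟩ <;>
        simp [hsdef, chainSeq]
    | succ k ih =>
      obtain ⟨h0, h1, hqk, hd⟩ := ih
      have hδk : 0 < (1 - s k)*ρ + (s k)*r := hδpos _ h0 h1
      have hstep0 : 0 ≤ ((1 - s k)*ρ + (s k)*r)/(4*M) := by positivity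
      have hsucc : s (k+1) = min 1 (s k + ((1 - s k)*ρ + (s k)*r)/(4*M)) := rfl
      have h0' : 0 ≤ s (k+1) := by
        rw [hsucc]; exact le_min zero_le_one (by linarith)
      have h1' : s (k+1) ≤ 1 := by rw [hsucc]; exact min_le_left _ _
      have hsle : s k ≤ s (k+1) := by
        rw [hsucc]; exact le_min h1 (by linarith)
      have hsle2 : s (k+1) ≤ s k + ((1 - s k)*ρ + (s k)*r)/(4*M) := by
        rw [hsucc]; exact min_le_right _ _
      have hq' : 1 - s (k+1) ≤ q^(k+1) := by
        rcases le_or_gt 1 (s k + ((1 - s k)*ρ + (s k)*r)/(4*M)) with h | h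
        · have : s (k+1) = 1 := by rw [hsucc, min_eq_left h]
          rw [this]; simp only [sub_self]; positivity
        · have heq : s (k+1) = s k + ((1 - s k)*ρ + (s k)*r)/(4*M) := by
            rw [hsucc, min_eq_right h.le]
          have hkey : (1 - s k)*ρ/(4*R) ≤ ((1 - s k)*ρ + (s k)*r)/(4*M) := by
            have h1 : (1 - s k)*ρ ≤ (1 - s k)*ρ + (s k)*r := by nlinarith
            have h2 : (1 - s k)*ρ/(4*R) ≤ (1 - s k)*ρ/(4*M) := by
              apply div_le_div_of_nonneg_left (by nlinarith) (by linarith) (by linarith)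
            calc (1 - s k)*ρ/(4*R) ≤ (1 - s k)*ρ/(4*M) := h2
            _ ≤ ((1 - s k)*ρ + (s k)*r)/(4*M) :=
                div_le_div_of_nonneg_right h1 (by linarith) |>.trans_eq rfl
          calc 1 - s (k+1) = (1 - s k) - ((1 - s k)*ρ + (s k)*r)/(4*M) := by
                rw [heq]; ring
          _ ≤ (1 - s k) - (1 - s k)*ρ/(4*R) := by linarith
          _ = (1 - s k) * q := by rw [hqdef]; field_simp
          _ ≤ q^k * q := mul_le_mul_of_nonneg_right hqk hq0.le
          _ = q^(k+1) := by ring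
      refine ⟨h0', h1', hq', ?_⟩
      -- Harnack step
      set pt := a + (s k) • (z - a) with hpt
      set pt' := a + (s (k+1)) • (z - a) with hpt'
      have hballsub : Metric.ball pt ((1 - s k)*ρ + (s k)*r) ⊆ D₁ := hfam _ h0 h1
      have hdist : dist pt' pt ≤ ((1 - s k)*ρ + (s k)*r) / 4 := by
        have : pt' - pt = (s (k+1) - s k) • (z - a) := by
          rw [hpt, hpt']; module
        rw [dist_eq_norm, this, norm_smul, Real.norm_eq_abs,
          _root_.abs_of_nonneg (by linarith)]
        calc (s (k+1) - s k) * ‖z - a‖ ≤ (((1 - s k)*ρ + (s k)*r)/(4*M)) * M := by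
              apply mul_le_mul (by linarith) hzaM (norm_nonneg _) hstep0
        _ = ((1 - s k)*ρ + (s k)*r) / 4 := by field_simp
      have hstep := harnack_step hδk (hg.mono hballsub)
        (fun y hy => hlt y (hballsub hy)) hdist
      calc (c - (g a).re) / 3^(k+1) = ((c - (g a).re) / 3^k) / 3 := by
            rw [div_div]; ring_nf
      _ ≤ (c - (g pt).re) / 3 := by linarith
      _ ≤ c - (g pt').re := hstep
  -- terminal step
  obtain ⟨h0, h1, hqk, hd⟩ := hchain N
  have hsN : 1 - s N ≤ r/(8*R) := le_trans hqk hN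
  have hsN1 : s (N+1) = 1 := by
    have hδN : 0 < (1 - s N)*ρ + (s N)*r := hδpos _ h0 h1
    have hsNge : 3/4 ≤ s N := by
      have : r/(8*R) ≤ 1/4 := by
        rw [div_le_div_iff₀ (by linarith) (by norm_num)]; linarith
      linarith
    have hkey : 1 ≤ s N + ((1 - s N)*ρ + (s N)*r)/(4*M) := by
      have h2 : (s N) * r ≤ (1 - s N)*ρ + (s N)*r := by nlinarith
      have h3 : (3/4) * r ≤ (s N) * r := by nlinarith
      have h4 : r/(8*R) ≤ ((3/4) * r)/(4*M) := by
        rw [div_le_div_iff₀ (by linarith) (by linarith)]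
        nlinarith
      have h5 : ((3/4) * r)/(4*M) ≤ ((1 - s N)*ρ + (s N)*r)/(4*M) := by
        apply div_le_div_of_nonneg_right (by linarith) (by linarith)
      linarith
    have hrfl : s (N+1) = min 1 (s N + ((1 - s N)*ρ + (s N)*r)/(4*M)) := rfl
    rw [hrfl]
    exact min_eq_left hkey
  obtain ⟨_, _, _, hdfin⟩ := hchain (N+1)
  rw [hsN1, one_smul, add_sub_cancel] at hdfin
  exact hdfin

end chain


section mainthm

variable {n m : ℕ}



set_option maxHeartbeats 1000000 in
/-- Schwarz-type lemma for convex domains (Theorem 1.2): for a bounded convex domain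
`D₁ ⊆ ℂⁿ` and `a ∈ D₁`, there are `α ≥ 1` (depending only on `D₁`) and `C > 0`
(depending only on `D₁` and `a`) such that for every convex domain `D₂ ⊆ ℂᵐ`, every
`b ∈ D₂`, every holomorphic `φ : D₁ → D₂` with `φ(a) = b`, and every `r > 0`,
`dist(φ({z : dist(z,D₁ᶜ) ≥ r}), D₂ᶜ) ≥ C·dist(b,D₂ᶜ)·r^α`. -/
theorem stmt_12 (n : ℕ) (D₁ : Set (EuclideanSpace ℂ (Fin n)))
    (hD₁open : IsOpen D₁) (hD₁conv : Convex ℝ D₁) (hD₁bd : Bornology.IsBounded D₁)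
    (hD₁ne : D₁.Nonempty) (a : EuclideanSpace ℂ (Fin n)) (ha : a ∈ D₁) :
    ∃ α : ℝ, 1 ≤ α ∧ ∃ C : ℝ, 0 < C ∧
      ∀ (m : ℕ) (D₂ : Set (EuclideanSpace ℂ (Fin m))),
        IsOpen D₂ → Convex ℝ D₂ → D₂.Nonempty →
        ∀ b ∈ D₂, ∀ φ : EuclideanSpace ℂ (Fin n) → EuclideanSpace ℂ (Fin m),
          DifferentiableOn ℂ φ D₁ → Set.MapsTo φ D₁ D₂ → φ a = b →
          ∀ r : ℝ, 0 < r → ∀ z ∈ D₁, r ≤ Metric.infDist z D₁ᶜ →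
            C * Metric.infDist b D₂ᶜ * r ^ α ≤ Metric.infDist (φ z) D₂ᶜ := by
  classical
  -- inner and outer radii
  obtain ⟨ρ, hρ, hballa⟩ := Metric.isOpen_iff.1 hD₁open a ha
  obtain ⟨R₀, hR₀⟩ := hD₁bd.subset_ball a
  set R : ℝ := max R₀ ρ with hRdef
  have hρR : ρ ≤ R := le_max_right _ _
  have hR : 0 < R := lt_of_lt_of_le hρ hρR
  have hD₁R : D₁ ⊆ ball a R := hR₀.trans (Metric.ball_subset_ball (le_max_left _ _))
  set q : ℝ := 1 - ρ/(4*R) with hqdef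
  have hq14 : ρ/(4*R) ≤ 1/4 := by
    rw [div_le_div_iff₀ (by linarith) (by norm_num)]; linarith
  have hq4r : 0 < ρ/(4*R) := by positivity
  have hq0 : 0 < q := by simp only [hqdef]; linarith
  have hq1 : q < 1 := by simp only [hqdef]; linarith
  have hlogq : Real.log q < 0 := Real.log_neg hq0 hq1
  set lq : ℝ := -Real.log q with hlqdef
  have hlq : 0 < lq := by simp only [hlqdef]; linarith
  set α : ℝ := Real.log 3 / lq with hαdef
  have hα1 : 1 ≤ α := by
    rw [hαdef, le_div_iff₀ hlq]
    have h13 : Real.log (3⁻¹ : ℝ) ≤ Real.log q :=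
      Real.log_le_log (by norm_num) (by simp only [hqdef]; linarith)
    rw [Real.log_inv] at h13
    simp only [hlqdef]; linarith
  have h8Rpos : (0:ℝ) < (8*R) := by linarith
  set C : ℝ := ((9:ℝ) * (8*R)^α)⁻¹ with hCdef
  have hrpow8R : (0:ℝ) < (8*R)^α := Real.rpow_pos_of_pos h8Rpos α
  have hC : 0 < C := by rw [hCdef]; positivity
  refine ⟨α, hα1, C, hC, ?_⟩
  intro m D₂ hD₂open hD₂conv hD₂ne b hb φ hφ hmapsφ hφa r hr z hzD hzr
  -- complement of D₁ is nonempty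
  have hD₁c : D₁ᶜ.Nonempty := by
    by_contra h
    rw [Set.not_nonempty_iff_eq_empty] at h
    rw [h, Metric.infDist_empty] at hzr
    linarith
  obtain ⟨wc, hwc⟩ := hD₁c
  have hwa : wc ≠ a := fun h => hwc (h ▸ ha)
  have hwa' : wc - a ≠ 0 := sub_ne_zero.2 hwa
  set u₀ : EuclideanSpace ℂ (Fin n) := ‖wc - a‖⁻¹ • (wc - a) with hu₀
  have hu₀n : ‖u₀‖ = 1 := by
    rw [hu₀, norm_smul, norm_inv, norm_norm, inv_mul_cancel₀ (norm_ne_zero_iff.2 hwa')]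
  have hzaR : ‖z - a‖ < R := by
    have := hD₁R hzD
    rwa [mem_ball, dist_eq_norm] at this
  -- r ≤ 2R
  have hr2R : r ≤ 2*R := by
    set w₁ : EuclideanSpace ℂ (Fin n) := z + (2*R) • u₀ with hw₁def
    have hw₁ : w₁ ∈ D₁ᶜ := by
      intro hmem
      have h1 : dist w₁ a < R := by
        have := hD₁R hmem; rwa [mem_ball] at this
      have h2 : ‖(2*R) • u₀‖ = 2*R := by
        rw [norm_smul, Real.norm_eq_abs, abs_of_pos (by linarith), hu₀n, mul_one]
      have h3 : ‖(2*R) • u₀‖ ≤ ‖w₁ - a‖ + ‖z - a‖ := by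
        have : (2*R) • u₀ = (w₁ - a) - (z - a) := by rw [hw₁def]; abel
        rw [this]; exact norm_sub_le _ _
      rw [dist_eq_norm] at h1
      rw [h2] at h3
      linarith
    calc r ≤ Metric.infDist z D₁ᶜ := hzr
    _ ≤ dist z w₁ := Metric.infDist_le_dist_of_mem hw₁
    _ = 2*R := by
        rw [dist_eq_norm', hw₁def, add_sub_cancel_left, norm_smul, Real.norm_eq_abs,
          abs_of_pos (by linarith), hu₀n, mul_one]
  -- ball around z inside D₁
  have hrball : ball z r ⊆ D₁ := by
    intro x hx
    by_contra hxc
    have := Metric.infDist_le_dist_of_mem (Set.mem_compl hxc) (x := z)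
    rw [mem_ball'] at hx
    linarith
  -- family of balls along the segment
  have hfam : ∀ s : ℝ, 0 ≤ s → s ≤ 1 →
      Metric.ball (a + s • (z - a)) ((1-s)*ρ + s*r) ⊆ D₁ := by
    intro s hs0 hs1 x hx
    set δ : ℝ := (1-s)*ρ + s*r with hδdef
    have hδ : 0 < δ := by
      rcases le_or_gt s (1/2) with h | h
      · have : (1-s)*ρ ≥ (1/2)*ρ := by nlinarith
        nlinarith
      · nlinarith
    set v : EuclideanSpace ℂ (Fin n) := x - (a + s • (z - a)) with hv
    have hvn : ‖v‖ < δ := by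
      rw [hv]; rw [mem_ball_iff_norm] at hx; exact hx
    have hy₁ : a + (ρ/δ) • v ∈ D₁ := by
      apply hballa
      rw [mem_ball_iff_norm, add_sub_cancel_left, norm_smul, Real.norm_eq_abs,
        abs_of_pos (by positivity)]
      calc (ρ/δ) * ‖v‖ < (ρ/δ) * δ := by
            apply mul_lt_mul_of_pos_left hvn (by positivity)
      _ = ρ := by field_simp
    have hy₂ : z + (r/δ) • v ∈ D₁ := by
      apply hrball
      rw [mem_ball_iff_norm, add_sub_cancel_left, norm_smul, Real.norm_eq_abs,
        abs_of_pos (by positivity)]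
      calc (r/δ) * ‖v‖ < (r/δ) * δ := by
            apply mul_lt_mul_of_pos_left hvn (by positivity)
      _ = r := by field_simp
    have hcomb := hD₁conv hy₁ hy₂ (by linarith : (0:ℝ) ≤ 1 - s) hs0 (by ring)
    have hcoef : (1-s)*(ρ/δ) + s*(r/δ) = 1 := by
      field_simp
      linarith [hδdef]
    have hxeq : (1-s) • (a + (ρ/δ) • v) + s • (z + (r/δ) • v) = x := by
      have h1 : (1-s) • (a + (ρ/δ) • v) + s • (z + (r/δ) • v) =
          (a + s • (z - a)) + ((1-s)*(ρ/δ) + s*(r/δ)) • v := by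
        module
      rw [h1, hcoef, one_smul, hv]
      abel
    rwa [hxeq] at hcomb
  -- split on D₂ᶜ empty
  rcases Set.eq_empty_or_nonempty D₂ᶜ with hc | hc
  · rw [hc, Metric.infDist_empty]
    simp [Metric.infDist_nonneg]
  suffices hsuff : ∀ p ∈ D₂ᶜ, r ^ α * (C * Metric.infDist b D₂ᶜ) ≤ dist (φ z) p by
    by_contra hcon
    push_neg at hcon
    obtain ⟨p, hp, hplt⟩ := (Metric.infDist_lt_iff hc).1 hcon
    have heq : C * Metric.infDist b D₂ᶜ * r ^ α = r ^ α * (C * Metric.infDist b D₂ᶜ) := by ring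
    linarith [hsuff p hp]
  intro p hp
  -- separating functional
  obtain ⟨f, hf⟩ := geometric_hahn_banach_open_point hD₂conv hD₂open hp
  have hbp : b ≠ p := by
    intro h
    exact absurd (hf b hb) (by rw [h]; exact lt_irrefl _)
  haveI : Nontrivial (EuclideanSpace ℂ (Fin m)) := nontrivial_of_ne b p hbp
  obtain ⟨u, husph, humax⟩ := (isCompact_sphere (0 : EuclideanSpace ℂ (Fin m)) 1).exists_isMaxOn
    ((NormedSpace.sphere_nonempty).2 zero_le_one) (f.continuous.continuousOn)
  have hun : ‖u‖ = 1 := by rwa [mem_sphere_zero_iff_norm] at husph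
  have hbound : ∀ x : EuclideanSpace ℂ (Fin m), f x ≤ f u * ‖x‖ := by
    intro x
    rcases eq_or_ne x 0 with rfl | hx0
    · simp
    · have hxn : (0:ℝ) < ‖x‖ := norm_pos_iff.2 hx0
      have hmem : ‖x‖⁻¹ • x ∈ sphere (0 : EuclideanSpace ℂ (Fin m)) 1 := by
        rw [mem_sphere_zero_iff_norm, norm_smul, norm_inv, norm_norm,
          inv_mul_cancel₀ hxn.ne']
      have := humax hmem
      simp only [Set.mem_setOf_eq, map_smul, smul_eq_mul] at this
      have h2 : ‖x‖⁻¹ * f x ≤ f u := this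
      calc f x = ‖x‖ * (‖x‖⁻¹ * f x) := by field_simp
      _ ≤ ‖x‖ * f u := by apply mul_le_mul_of_nonneg_left h2 hxn.le
      _ = f u * ‖x‖ := by ring
  have hfpb : 0 < f p - f b := sub_pos.2 (hf b hb)
  have hfu : 0 < f u := by
    by_contra hfu
    push_neg at hfu
    have h1 : f (p - b) ≤ f u * ‖p - b‖ := hbound _
    rw [map_sub] at h1
    nlinarith [norm_nonneg (p - b)]
  -- infDist b D₂ᶜ ≤ (f p - f b)/(f u)
  have hdb : Metric.infDist b D₂ᶜ ≤ (f p - f b)/(f u) := by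
    set t : ℝ := (f p - f b)/(f u) with htdef
    have ht : 0 < t := by positivity
    have hwD₂ : b + t • u ∈ D₂ᶜ := by
      intro hmem
      have h1 : f (b + t • u) < f p := hf _ hmem
      rw [map_add, map_smul, smul_eq_mul, htdef, div_mul_cancel₀ _ hfu.ne'] at h1
      linarith
    calc Metric.infDist b D₂ᶜ ≤ dist b (b + t • u) := Metric.infDist_le_dist_of_mem hwD₂
    _ = t := by
        rw [dist_eq_norm]
        simp only [sub_add_cancel_left, norm_neg]
        rw [norm_smul, Real.norm_eq_abs, abs_of_pos ht, hun, mul_one]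
  -- complexified functional
  set g : EuclideanSpace ℂ (Fin n) → ℂ :=
    fun x => (ContinuousLinearMap.extendTo𝕜' f : EuclideanSpace ℂ (Fin m) →L[ℂ] ℂ) (φ x)
    with hgdef
  have hgre : ∀ x, (g x).re = f (φ x) := by
    intro x
    rw [hgdef]
    simp only [ContinuousLinearMap.extendTo𝕜'_apply]
    exact StrongDual.re_extendRCLike_apply (𝕜 := ℂ) f (φ x)
  have hgdiff : DifferentiableOn ℂ g D₁ := by
    have h := (ContinuousLinearMap.extendTo𝕜' f (𝕜 := ℂ)).differentiable.comp_differentiableOn hφ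
    simpa [hgdef, Function.comp_def] using h
  have hglt : ∀ y ∈ D₁, (g y).re < f p := by
    intro y hy
    rw [hgre]
    exact hf _ (hmapsφ hy)
  -- terminal index
  set N : ℕ := Nat.ceil (Real.log (8*R/r) / lq) with hNdef
  have h8Rr1 : 1 ≤ 8*R/r := by
    rw [le_div_iff₀ hr]; linarith
  have h8Rrpos : 0 < 8*R/r := by positivity
  have hlog8 : 0 ≤ Real.log (8*R/r) := Real.log_nonneg h8Rr1
  have hNle : Real.log (8*R/r) ≤ (N:ℝ) * lq := by
    have h := Nat.le_ceil (Real.log (8*R/r) / lq)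
    rw [div_le_iff₀ hlq] at h
    exact_mod_cast h
  have hqN : q^N ≤ r/(8*R) := by
    have h1 : q^N = Real.exp ((N:ℝ) * Real.log q) := by
      rw [Real.exp_nat_mul, Real.exp_log hq0]
    have h2 : r/(8*R) = Real.exp (Real.log (r/(8*R))) :=
      (Real.exp_log (by positivity)).symm
    have h3 : Real.log (r/(8*R)) = - Real.log (8*R/r) := by
      rw [show r/(8*R) = (8*R/r)⁻¹ by field_simp, Real.log_inv]
    rw [h1, h2]
    apply Real.exp_le_exp.2
    rw [h3]
    have : (N:ℝ) * Real.log q = -((N:ℝ) * lq) := by simp only [hlqdef]; ring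
    rw [this]
    linarith
  -- chain bound
  have hchain := chain_bound D₁ hρ hr hR hzaR.le hρR hr2R hfam hgdiff hglt N hqN
  rw [hgre, hgre, hφa] at hchain
  -- 3^(N+1) ≤ 9 * (8R/r)^α
  have hNlt : (N:ℝ) < Real.log (8*R/r) / lq + 1 := by
    rw [hNdef]
    exact_mod_cast Nat.ceil_lt_add_one (by positivity)
  have h3N : (3:ℝ)^(N+1) ≤ 9 * ((8*R)/r)^α := by
    have h1 : ((3:ℝ))^(N+1) = Real.exp (((N:ℝ)+1) * Real.log 3) := by
      rw [show ((N:ℝ)+1) = ((N+1 : ℕ):ℝ) by push_cast; ring,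
        Real.exp_nat_mul, Real.exp_log (by norm_num : (0:ℝ) < 3)]
    have h2 : ((8*R)/r)^α = Real.exp (α * Real.log (8*R/r)) := by
      rw [Real.rpow_def_of_pos h8Rrpos]; ring_nf
    have h3 : (9:ℝ) = Real.exp (2 * Real.log 3) := by
      rw [show (2:ℝ) * Real.log 3 = Real.log (3^2) by rw [Real.log_pow]; push_cast; ring]
      rw [Real.exp_log (by norm_num)]
      norm_num
    rw [h1, h2, h3, ← Real.exp_add]
    apply Real.exp_le_exp.2
    have hαlog : α * Real.log (8*R/r) = (Real.log (8*R/r) / lq) * Real.log 3 := by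
      rw [hαdef]; field_simp
    rw [hαlog]
    have hlog3 : 0 < Real.log 3 := Real.log_pos (by norm_num)
    nlinarith [hNlt, hlog3]
  -- combine
  have hrα : 0 < r ^ α := Real.rpow_pos_of_pos hr α
  have hdistlb : (f p - f (φ z)) / (f u) ≤ dist (φ z) p := by
    rw [div_le_iff₀ hfu]
    have h1 : f (p - φ z) ≤ f u * ‖p - φ z‖ := hbound _
    rw [map_sub] at h1
    rw [dist_comm, dist_eq_norm]
    linarith
  have hdiv : (8*R/r)^α = (8*R)^α / r^α := Real.div_rpow (by linarith) hr.le α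
  have h3Npos : (0:ℝ) < 3^(N+1) := by positivity
  have hstep1 : C * r^α * 3^(N+1) ≤ 1 := by
    have h9 : (0:ℝ) < 9*(8*R)^α := by positivity
    have hmain : r^α * 3^(N+1) ≤ 9 * (8*R)^α := by
      rw [hdiv] at h3N
      calc r^α * 3^(N+1) ≤ r^α * (9 * ((8*R)^α / r^α)) := by
            apply mul_le_mul_of_nonneg_left h3N hrα.le
      _ = 9 * (8*R)^α := by field_simp
    calc C * r^α * 3^(N+1) = (r^α * 3^(N+1)) * (9*(8*R)^α)⁻¹ := by rw [hCdef]; ring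
    _ ≤ (9*(8*R)^α) * (9*(8*R)^α)⁻¹ := by
        apply mul_le_mul_of_nonneg_right hmain (by positivity)
    _ = 1 := mul_inv_cancel₀ h9.ne'
  have hdbnn : 0 ≤ Metric.infDist b D₂ᶜ := Metric.infDist_nonneg
  calc r ^ α * (C * Metric.infDist b D₂ᶜ)
      ≤ r ^ α * (C * ((f p - f b)/(f u))) := by
        apply mul_le_mul_of_nonneg_left _ hrα.le
        exact mul_le_mul_of_nonneg_left hdb hC.le
    _ = (C * r^α * 3^(N+1)) * (((f p - f b)/3^(N+1))/(f u)) := by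
        field_simp
    _ ≤ 1 * (((f p - f b)/3^(N+1))/(f u)) := by
        apply mul_le_mul_of_nonneg_right hstep1
        positivity
    _ = ((f p - f b)/3^(N+1))/(f u) := one_mul _
    _ ≤ (f p - f (φ z))/(f u) := by
        gcongr

    _ ≤ dist (φ z) p := hdistlb
end mainthm
end

section
/- Let Ω ⊆ ℂⁿ be a bounded convex domain and z₀ ∈ Ω. Then there exist constants α > 1 and C(z₀) > 0 such that for every z ∈ Ω, the Kobayashi distance satisfies k_Ω(z₀, z) ≤ C(z₀) + (α/2)·log(1/dist(z, Ωᶜ)). -/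
set_option maxHeartbeats 1000000


open Metric

lemma poincareDist_nonneg (a b : ℂ) : 0 ≤ poincareDist a b := by
  unfold poincareDist
  set ρ := ‖(a - b) / (1 - (starRingEnd ℂ) a * b)‖ with hρdef
  have hρ0 : 0 ≤ ρ := norm_nonneg _
  rcases eq_or_ne ρ 1 with h | h
  · simp [h]
  have h3 : (0:ℝ) < |1 - ρ| := abs_pos.mpr (sub_ne_zero.mpr fun h' => h h'.symm)
  have h2 : |1 - ρ| ≤ 1 + ρ := by
    rw [abs_le]; constructor <;> linarith
  have : Real.log ((1 + ρ) / (1 - ρ)) = Real.log ((1 + ρ) / |1 - ρ|) := by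
    rw [← Real.log_abs, abs_div, abs_of_nonneg (by linarith : (0:ℝ) ≤ 1 + ρ)]
  rw [this]
  have := Real.log_nonneg ((one_le_div h3).mpr h2)
  linarith

lemma poincareDist_zero_half : poincareDist 0 (1/2 : ℂ) = Real.log 3 / 2 := by
  unfold poincareDist
  have h1 : ((0:ℂ) - 1/2) / (1 - (starRingEnd ℂ) 0 * (1/2)) = -(1/2) := by
    simp
  rw [h1]
  have h2 : ‖(-(1/2) : ℂ)‖ = 1/2 := by
    rw [norm_neg]
    simp [map_div₀]
  rw [h2]
  norm_num
  ring

lemma ball_infDist_subset {F : Type*} [NormedAddCommGroup F] {Ω : Set F} (p : F) :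
    ball p (infDist p Ωᶜ) ⊆ Ω := by
  intro y hy
  by_contra hyΩ
  have h := infDist_le_dist_of_mem (x := p) (Set.mem_compl hyΩ : y ∈ Ωᶜ)
  rw [mem_ball, dist_comm] at hy
  linarith

lemma infDist_concave {F : Type*} [NormedAddCommGroup F] [NormedSpace ℝ F] {Ω : Set F}
    (hconv : Convex ℝ Ω) (hc : Ωᶜ.Nonempty) {a b : F}
    (hra : 0 < infDist a Ωᶜ) (hrb : 0 < infDist b Ωᶜ)
    {s t : ℝ} (hs0 : 0 ≤ s) (ht0 : 0 ≤ t) (hst : s + t = 1) :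
    s * infDist a Ωᶜ + t * infDist b Ωᶜ ≤ infDist (s • a + t • b) Ωᶜ := by
  set ra := infDist a Ωᶜ
  set rb := infDist b Ωᶜ
  set r := s * ra + t * rb with hrdef
  have hr : 0 < r := by
    rcases le_or_gt s (1/2) with h | h
    · nlinarith
    · nlinarith
  by_contra hlt
  push_neg at hlt
  obtain ⟨y, hyc, hyd⟩ := (infDist_lt_iff hc).mp hlt
  set w := s • a + t • b
  set v := y - w with hvdef
  have hv : ‖v‖ < r := by rwa [hvdef, ← dist_eq_norm, dist_comm]
  have hp : a + (ra / r) • v ∈ Ω := by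
    apply ball_infDist_subset a
    rw [mem_ball, dist_eq_norm, add_sub_cancel_left, norm_smul,
      Real.norm_eq_abs, abs_of_nonneg (by positivity)]
    calc ra / r * ‖v‖ < ra / r * r := by
          apply mul_lt_mul_of_pos_left hv (by positivity)
      _ = ra := by field_simp
  have hq : b + (rb / r) • v ∈ Ω := by
    apply ball_infDist_subset b
    rw [mem_ball, dist_eq_norm, add_sub_cancel_left, norm_smul,
      Real.norm_eq_abs, abs_of_nonneg (by positivity)]
    calc rb / r * ‖v‖ < rb / r * r := by
          apply mul_lt_mul_of_pos_left hv (by positivity)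
      _ = rb := by field_simp
  have hy' : y ∈ Ω := by
    have hkey : s • (a + (ra / r) • v) + t • (b + (rb / r) • v) = y := by
      have hc1 : s * (ra / r) + t * (rb / r) = 1 := by
        field_simp [hrdef]
        linarith [hrdef]
      have : s • (a + (ra / r) • v) + t • (b + (rb / r) • v)
          = w + (s * (ra / r) + t * (rb / r)) • v := by
        simp only [w, smul_add, smul_smul, add_smul]; abel
      rw [this, hc1, one_smul, hvdef]; abel
    rw [← hkey]
    exact hconv hp hq hs0 ht0 hst
  exact hyc hy'

lemma chain_bound_s13 {F : Type*} [NormedAddCommGroup F] [NormedSpace ℂ F] {Ω : Set F}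
    (m : ℕ) (w : Fin (m+1) → F)
    (hpos : ∀ i : Fin m, 0 < infDist (w i.castSucc) Ωᶜ)
    (hstep : ∀ i : Fin m, ‖w i.succ - w i.castSucc‖ ≤ infDist (w i.castSucc) Ωᶜ / 2) :
    kobayashiDist Ω (w 0) (w (Fin.last m)) ≤ m * (Real.log 3 / 2) := by
  apply csInf_le
  · refine ⟨0, fun S hS => ?_⟩
    obtain ⟨m', zs, f, a, b, _, _, _, hsum⟩ := hS
    rw [hsum]
    exact Finset.sum_nonneg fun i _ => poincareDist_nonneg _ _
  · refine ⟨m, w, (fun i ζ => w i.castSucc + (2 * ζ) • (w i.succ - w i.castSucc)),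
      (fun _ => 0), (fun _ => 1/2), rfl, rfl, fun i => ?_, ?_⟩
    · refine ⟨by simp, by norm_num [mem_ball], ?_, ?_, by simp, ?_⟩
      · apply Differentiable.differentiableOn
        exact (differentiable_const _).add
          (((differentiable_id.const_mul (2:ℂ))).smul_const _)
      · intro ζ hζ
        apply ball_infDist_subset (w i.castSucc)
        rw [mem_ball, dist_eq_norm, add_sub_cancel_left, norm_smul]
        have h1 : ‖(2:ℂ) * ζ‖ = 2 * ‖ζ‖ := by
          rw [norm_mul]; norm_num
        rw [h1]
        have hz1 : ‖ζ‖ < 1 := by rwa [mem_ball_zero_iff] at hζ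
        calc 2 * ‖ζ‖ * ‖w i.succ - w i.castSucc‖
            ≤ 2 * ‖ζ‖ * (infDist (w i.castSucc) Ωᶜ / 2) := by
              apply mul_le_mul_of_nonneg_left (hstep i) (by positivity)
          _ = ‖ζ‖ * infDist (w i.castSucc) Ωᶜ := by ring
          _ < 1 * infDist (w i.castSucc) Ωᶜ := by
              apply mul_lt_mul_of_pos_right hz1 (hpos i)
          _ = _ := one_mul _
      · norm_num
    · rw [Finset.sum_congr rfl (fun i _ => poincareDist_zero_half)]
      simp [Finset.sum_const, mul_comm]

/-- Mercer's estimate: on a bounded convex domain `Ω ⊆ ℂⁿ`, for fixed `z₀ ∈ Ω` there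
are `α > 1` and `C > 0` with `k_Ω(z₀,z) ≤ C + (α/2) log(1/dist(z,Ωᶜ))` for all `z ∈ Ω`. -/
theorem stmt_13 (n : ℕ) (Ω : Set (EuclideanSpace ℂ (Fin n)))
    (hopen : IsOpen Ω) (hconv : Convex ℝ Ω) (hbd : Bornology.IsBounded Ω)
    (hne : Ω.Nonempty) (z₀ : EuclideanSpace ℂ (Fin n)) (hz₀ : z₀ ∈ Ω) :
    ∃ α : ℝ, 1 < α ∧ ∃ C : ℝ, 0 < C ∧
      ∀ z ∈ Ω, kobayashiDist Ω z₀ z ≤ C + (α / 2) * Real.log (1 / Metric.infDist z Ωᶜ) := by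
  classical
  rcases Set.eq_empty_or_nonempty Ωᶜ with hcompl | hcompl
  · -- Ω is everything; boundedness forces a single point, chains are trivial.
    refine ⟨2, by norm_num, 1, by norm_num, fun z hz => ?_⟩
    have hΩu : Ω = Set.univ := by rwa [← Set.compl_empty_iff]
    have hzz : z = z₀ := by
      by_contra hne'
      obtain ⟨R, hR⟩ := hbd.subset_closedBall 0
      set v := z - z₀ with hvdef
      have hv : v ≠ 0 := sub_ne_zero.mpr hne'
      have hnv : 0 < ‖v‖ := norm_pos_iff.mpr hv
      have h1 := hR (by rw [hΩu]; trivial : ((|R| + 1) / ‖v‖) • v ∈ Ω)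
      rw [mem_closedBall, dist_zero_right, norm_smul, Real.norm_eq_abs,
        abs_of_nonneg (by positivity), div_mul_cancel₀ _ hnv.ne'] at h1
      have := le_abs_self R
      linarith
    subst hzz
    have hk := chain_bound_s13 (Ω := Ω) 0 (fun _ => z) (fun i => i.elim0) (fun i => i.elim0)
    simp only [Nat.cast_zero, zero_mul] at hk
    rw [hcompl, Metric.infDist_empty]
    norm_num
    exact hk.trans (by norm_num)
  · obtain ⟨p, hp⟩ := hcompl
    have hcne : Ωᶜ.Nonempty := ⟨p, hp⟩
    have hposΩ : ∀ x ∈ Ω, 0 < infDist x Ωᶜ := fun x hx =>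
      (hopen.isClosed_compl.notMem_iff_infDist_pos hcne).mp (fun h => h hx)
    set r0 := infDist z₀ Ωᶜ with hr0def
    have hr0 : 0 < r0 := hposΩ z₀ hz₀
    obtain ⟨R, hR⟩ := hbd.subset_closedBall z₀
    have hR0 : 0 ≤ R := by
      have := hR hz₀; rwa [mem_closedBall, dist_self] at this
    set D := max (max R r0) (dist z₀ p + R) + 1 with hDdef
    have hD1 : 1 ≤ D := by
      have h0 : (0:ℝ) ≤ max (max R r0) (dist z₀ p + R) :=
        le_trans hR0 (le_trans (le_max_left _ _) (le_max_left _ _))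
      linarith
    have hDpos : 0 < D := by linarith
    have hr0D : r0 ≤ D := by
      have : r0 ≤ max (max R r0) (dist z₀ p + R) :=
        le_trans (le_max_right _ _) (le_max_left _ _)
      linarith
    have hdistD : ∀ z ∈ Ω, dist z z₀ ≤ D := by
      intro z hz
      have h1 := hR hz
      rw [mem_closedBall] at h1
      have : R ≤ max (max R r0) (dist z₀ p + R) :=
        le_trans (le_max_left _ _) (le_max_left _ _)
      linarith
    have hδle : ∀ z ∈ Ω, infDist z Ωᶜ ≤ D := by
      intro z hz
      have h1 : infDist z Ωᶜ ≤ dist z p := infDist_le_dist_of_mem hp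
      have h2 : dist z p ≤ dist z z₀ + dist z₀ p := dist_triangle _ _ _
      have h3 := hdistD z hz
      have h4 := hR hz
      rw [mem_closedBall] at h4
      have h5 : dist z₀ p + R ≤ max (max R r0) (dist z₀ p + R) := le_max_right _ _
      linarith
    set θ := 1 - r0 / (2 * D) with hθdef
    have hfrac : 0 < r0 / (2 * D) := by positivity
    have hfrac1 : r0 / (2 * D) ≤ 1 / 2 := by
      rw [div_le_div_iff₀ (by positivity) (by norm_num)]
      linarith
    have hθ0 : 0 < θ := by rw [hθdef]; linarith
    have hθ1 : θ < 1 := by rw [hθdef]; linarith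
    set β := -Real.log θ with hβdef
    have hβ : 0 < β := by
      have := Real.log_neg hθ0 hθ1
      rw [hβdef]; linarith
    set c0 := Real.log 3 / 2 with hc0def
    have hc0 : 0 < c0 := by
      have := Real.log_pos (by norm_num : (1:ℝ) < 3)
      rw [hc0def]; linarith
    have hlog4D : 0 < Real.log (4 * D) := Real.log_pos (by linarith)
    have hlogD : 0 ≤ Real.log D := Real.log_nonneg hD1
    have hαpos : 0 < c0 / β := by positivity
    clear_value β θ D r0 c0
    refine ⟨2 * (c0 / β) + 2, by linarith, c0 * (2 + Real.log (4 * D) / β) + Real.log D + 1,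
      ?_, fun z hz => ?_⟩
    · have h2 : 0 ≤ Real.log (4 * D) / β := div_nonneg hlog4D.le hβ.le
      nlinarith [mul_pos hc0 (show (0:ℝ) < 2 + Real.log (4 * D) / β by linarith)]
    · set δ := infDist z Ωᶜ with hδdef
      have hδ0 : 0 < δ := hposΩ z hz
      have hδD : δ ≤ D := hδle z hz
      have hex : ∃ k, θ ^ k < δ / (4 * D) :=
        exists_pow_lt_of_lt_one (by positivity) hθ1
      set N := Nat.find hex with hNdef
      have hN : θ ^ N < δ / (4 * D) := Nat.find_spec hex
      have hθN4 : θ ^ N ≤ 1 / 4 := by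
        have : δ / (4 * D) ≤ 1 / 4 := by
          rw [div_le_div_iff₀ (by positivity) (by norm_num)]
          linarith
        linarith
      -- counting bound
      have hcount : (N : ℝ) ≤ 1 + (Real.log (4 * D) - Real.log δ) / β := by
        have hlogδD : Real.log δ ≤ Real.log D := Real.log_le_log hδ0 hδD
        have hlogDle : Real.log D ≤ Real.log (4 * D) :=
          Real.log_le_log hDpos (by linarith)
        cases hNN : N with
        | zero =>
          have h6 : 0 ≤ (Real.log (4 * D) - Real.log δ) / β :=
            div_nonneg (by linarith) hβ.le
          simp
          linarith
        | succ M =>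
          have hM : ¬ θ ^ M < δ / (4 * D) := Nat.find_min hex (by omega)
          push_neg at hM
          have hlog := Real.log_le_log (by positivity) hM
          rw [Real.log_pow, Real.log_div (ne_of_gt hδ0) (by positivity)] at hlog
          have hMβ : (M : ℝ) * β ≤ Real.log (4 * D) - Real.log δ := by
            have e : (M : ℝ) * β = -((M : ℝ) * Real.log θ) := by rw [hβdef]; ring
            rw [e]; push_cast at hlog ⊢; linarith
          have hMle : (M : ℝ) ≤ (Real.log (4 * D) - Real.log δ) / β := by
            rw [le_div_iff₀ hβ]; linarith
          push_cast
          linarith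
      -- the chain
      clear_value δ N
      obtain ⟨w, hwdef⟩ : ∃ w : Fin (N + 2) → EuclideanSpace ℂ (Fin n),
          w = fun k : Fin (N + 2) => if (k : ℕ) ≤ N then
            (θ ^ (k : ℕ)) • z₀ + (1 - θ ^ (k : ℕ)) • z else z := ⟨_, rfl⟩
      have hθpow : ∀ k : ℕ, 0 < θ ^ k := fun k => pow_pos hθ0 k
      have hθpow1 : ∀ k : ℕ, θ ^ k ≤ 1 := fun k => pow_le_one₀ hθ0.le hθ1.le
      have hwmem : ∀ k : Fin (N + 2), w k ∈ Ω := by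
        intro k
        simp only [hwdef]
        by_cases h : (k : ℕ) ≤ N
        · rw [if_pos h]
          exact hconv hz₀ hz (hθpow _).le (by linarith [hθpow1 (k : ℕ)]) (by ring)
        · rw [if_neg h]; exact hz
      have hwlow : ∀ k : ℕ, k ≤ N →
          θ ^ k * r0 + (1 - θ ^ k) * δ ≤ infDist ((θ ^ k) • z₀ + (1 - θ ^ k) • z) Ωᶜ := by
        intro k hk
        have := infDist_concave (a := z₀) (b := z) hconv hcne (hr0def ▸ hr0) (hδdef ▸ hδ0)
          (hθpow k).le (by linarith [hθpow1 k]) (by ring : θ ^ k + (1 - θ ^ k) = 1)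
        rw [← hr0def, ← hδdef] at this
        exact this
      have hpos : ∀ i : Fin (N + 1), 0 < infDist (w i.castSucc) Ωᶜ :=
        fun i => hposΩ _ (hwmem _)
      have hzz₀D : ‖z - z₀‖ ≤ D := by
        rw [← dist_eq_norm]
        exact hdistD z hz
      have hstep : ∀ i : Fin (N + 1),
          ‖w i.succ - w i.castSucc‖ ≤ infDist (w i.castSucc) Ωᶜ / 2 := by
        intro i
        have hi : (i : ℕ) ≤ N := Nat.lt_succ_iff.mp i.isLt
        have hwc : w i.castSucc = (θ ^ (i : ℕ)) • z₀ + (1 - θ ^ (i : ℕ)) • z := by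
          simp only [hwdef, Fin.coe_castSucc]; rw [if_pos hi]
        have hlow := hwlow (i : ℕ) hi
        rw [← hwc] at hlow
        rcases lt_or_eq_of_le hi with hlt | heq
        · -- interior step
          have hws : w i.succ = (θ ^ ((i : ℕ) + 1)) • z₀ + (1 - θ ^ ((i : ℕ) + 1)) • z := by
            simp only [hwdef, Fin.val_succ]; rw [if_pos (by omega)]
          have hdiff : w i.succ - w i.castSucc
              = (θ ^ (i : ℕ) * (r0 / (2 * D))) • (z - z₀) := by
            rw [hws, hwc]
            have : θ ^ ((i : ℕ) + 1) = θ ^ (i : ℕ) * (1 - r0 / (2 * D)) := by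
              rw [pow_succ, hθdef]
            rw [this]
            module
          rw [hdiff, norm_smul, Real.norm_eq_abs, abs_of_nonneg (by positivity)]
          have h1 : θ ^ (i : ℕ) * (r0 / (2 * D)) * ‖z - z₀‖
              ≤ θ ^ (i : ℕ) * (r0 / (2 * D)) * D := by
            apply mul_le_mul_of_nonneg_left hzz₀D (by positivity)
          have h2 : θ ^ (i : ℕ) * (r0 / (2 * D)) * D = θ ^ (i : ℕ) * r0 / 2 := by
            field_simp
          have h3 : 0 ≤ (1 - θ ^ (i : ℕ)) * δ := by
            have := hθpow1 (i : ℕ); nlinarith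
          linarith
        · -- last step
          have hws : w i.succ = z := by
            simp only [hwdef, Fin.val_succ]; rw [if_neg (by omega)]
          have hdiff : w i.succ - w i.castSucc = (θ ^ (i : ℕ)) • (z - z₀) := by
            rw [hws, hwc]; module
          rw [hdiff, norm_smul, Real.norm_eq_abs, abs_of_nonneg (hθpow _).le]
          have h1 : θ ^ (i : ℕ) * ‖z - z₀‖ ≤ θ ^ (i : ℕ) * D := by
            apply mul_le_mul_of_nonneg_left hzz₀D (hθpow _).le
          have h2 : θ ^ (i : ℕ) * D ≤ δ / 4 := by
            rw [← heq] at hN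
            have := hN.le
            calc θ ^ (i : ℕ) * D ≤ (δ / (4 * D)) * D := by
                  apply mul_le_mul_of_nonneg_right this hDpos.le
              _ = δ / 4 := by field_simp
          have h3 : (1 - θ ^ (i : ℕ)) * δ ≥ (3 / 4) * δ := by
            rw [← heq] at hθN4
            nlinarith
          have h4 : 0 ≤ θ ^ (i : ℕ) * r0 := by positivity
          have hI : (3:ℝ)/4 * δ ≤ infDist (w i.castSucc) Ωᶜ := by
            refine le_trans ?_ hlow
            linarith only [h3, h4]
          calc θ ^ (i : ℕ) * ‖z - z₀‖ ≤ δ / 4 := by linarith only [h1, h2]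
            _ ≤ (3 / 4 * δ) / 2 := by linarith only [hδ0]
            _ ≤ infDist (w i.castSucc) Ωᶜ / 2 := by linarith only [hI]
      have hk := chain_bound_s13 (Ω := Ω) (N + 1) w hpos hstep
      have hw0 : w 0 = z₀ := by
        simp only [hwdef, Fin.val_zero]
        simp
      have hwlast : w (Fin.last (N + 1)) = z := by
        simp only [hwdef, Fin.val_last]
        rw [if_neg (by omega)]
      rw [hw0, hwlast] at hk
      -- final arithmetic
      rw [one_div, Real.log_inv]
      rw [← hc0def] at hk
      have hNc : ((N : ℝ) + 1) * c0 ≤ (2 + (Real.log (4 * D) - Real.log δ) / β) * c0 := by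
        apply mul_le_mul_of_nonneg_right _ hc0.le
        linarith
      have hexp : (2 + (Real.log (4 * D) - Real.log δ) / β) * c0
          = c0 * (2 + Real.log (4 * D) / β) + (c0 / β) * (-Real.log δ) := by
        field_simp
        ring
      have hlogδD : Real.log δ ≤ Real.log D := Real.log_le_log hδ0 hδD
      have hfinal : c0 * (2 + Real.log (4 * D) / β) + (c0 / β) * (-Real.log δ)
          ≤ c0 * (2 + Real.log (4 * D) / β) + Real.log D + 1
            + (2 * (c0 / β) + 2) / 2 * (-Real.log δ) := by
        have e : (2 * (c0 / β) + 2) / 2 * (-Real.log δ)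
            = (c0 / β) * (-Real.log δ) + (-Real.log δ) := by ring
        rw [e]
        linarith
      have hcast : ((N + 1 : ℕ) : ℝ) = (N : ℝ) + 1 := by push_cast; ring
      rw [hcast] at hk
      linarith
end

section
/- Let D ⊆ ℂⁿ be a bounded convex open set, p ∈ D, ξ a nonzero tangent vector at p, and let r be the supremum of radii of complex affine disks centred at p in direction ξ contained in D, i.e. r = sup{ρ > 0 : {p + zξ/‖ξ‖ : |z| < ρ} ⊆ D}. Then ‖ξ‖/(2r) ≤ κ_D(p,ξ) ≤ ‖ξ‖/r. -/
open Metric Set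

/-- Schwarz-type lemma for the half-plane `Re w < t`. -/
lemma halfplane_schwarz (g : ℂ → ℂ) (t : ℝ)
    (hd : DifferentiableOn ℂ g (ball (0:ℂ) 1))
    (hm : ∀ z ∈ ball (0:ℂ) 1, (g z).re < t) :
    ‖deriv g 0‖ ≤ 2 * (t - (g 0).re) := by
  have h0 : (0:ℂ) ∈ ball (0:ℂ) 1 := by simp
  set u0 : ℂ := g 0 with hu0
  have hu0re : u0.re < t := hm 0 h0
  set C : ℂ := (starRingEnd ℂ) u0 - ((2 * t : ℝ) : ℂ) with hC
  have hden : ∀ z ∈ ball (0:ℂ) 1, g z + C ≠ 0 := by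
    intro z hz h
    have hre : (g z + C).re = (g z).re + u0.re - 2 * t := by
      simp [hC, Complex.add_re, Complex.sub_re, Complex.conj_re]
      ring
    rw [h] at hre
    have h1 := hm z hz
    simp only [Complex.zero_re] at hre
    linarith
  set h : ℂ → ℂ := fun z => (g z - u0) / (g z + C) with hh
  have hlt : ∀ z ∈ ball (0:ℂ) 1, ‖g z - u0‖ < ‖g z + C‖ := by
    intro z hz
    have h1 : (g z).re < t := hm z hz
    have key : Complex.normSq (g z - u0) < Complex.normSq (g z + C) := by
      simp only [Complex.normSq_apply, hC, Complex.add_re, Complex.sub_re, Complex.add_im,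
        Complex.sub_im, Complex.conj_re, Complex.conj_im, Complex.ofReal_re, Complex.ofReal_im]
      nlinarith [mul_pos (show (0:ℝ) < t - u0.re by linarith)
        (show (0:ℝ) < t - (g z).re by linarith)]
    have := Real.sqrt_lt_sqrt (Complex.normSq_nonneg _) key
    simpa [Complex.norm_def] using this
  have hmaps : MapsTo h (ball (0:ℂ) 1) (ball (0:ℂ) 1) := by
    intro z hz
    simp only [hh, mem_ball, dist_zero_right, norm_div]
    rw [div_lt_one (by
      have h2 := hlt z hz
      have h3 := norm_nonneg (g z - u0)
      linarith)]
    exact hlt z hz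
  have hhd : DifferentiableOn ℂ h (ball (0:ℂ) 1) :=
    DifferentiableOn.div (hd.sub (differentiableOn_const _))
      (hd.add (differentiableOn_const _)) hden
  have hh0 : h 0 = 0 := by simp [hh, hu0]
  have hschwarz : ‖deriv h 0‖ ≤ 1 := by
    have := Complex.norm_deriv_le_div_of_mapsTo_ball hhd (by rw [hh0]; exact hmaps.mono_right ball_subset_closedBall) one_pos
    simpa using this
  have hga : DifferentiableAt ℂ g 0 := hd.differentiableAt (isOpen_ball.mem_nhds h0)
  have hgd : HasDerivAt g (deriv g 0) 0 := hga.hasDerivAt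
  have hden0 : u0 + C ≠ 0 := by simpa [hu0] using hden 0 h0
  have hder : HasDerivAt h ((deriv g 0 * (u0 + C) - (u0 - u0) * deriv g 0) / (u0 + C) ^ 2) 0 := by
    have := HasDerivAt.div (hgd.sub_const u0) (hgd.add_const C) (by simpa [hu0] using hden0)
    exact this
  have hderval : deriv h 0 = deriv g 0 / (u0 + C) := by
    rw [hder.deriv]
    field_simp
    ring
  have hu0C : u0 + C = ((2 * (u0.re - t) : ℝ) : ℂ) := by
    apply Complex.ext <;>
      simp [hC, Complex.add_re, Complex.sub_re, Complex.conj_re, Complex.add_im,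
        Complex.sub_im, Complex.conj_im] <;> ring
  rw [hderval, norm_div, hu0C] at hschwarz
  have habs : ‖((2 * (u0.re - t) : ℝ) : ℂ)‖ = 2 * (t - u0.re) := by
    rw [Complex.norm_real, Real.norm_eq_abs, abs_of_neg (by linarith)]
    ring
  rw [habs] at hschwarz
  exact (div_le_one (by linarith)).mp hschwarz

/-- Graham's estimate: for a bounded convex open `D ⊆ ℂⁿ`, `p ∈ D`, `ξ ≠ 0`, and
`r` the supremum of radii of affine disks centred at `p` in direction `ξ` inside `D`,
`‖ξ‖/(2r) ≤ κ_D(p,ξ) ≤ ‖ξ‖/r`. -/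
theorem stmt_14 (n : ℕ) (D : Set (EuclideanSpace ℂ (Fin n)))
    (hopen : IsOpen D) (hconv : Convex ℝ D) (hbd : Bornology.IsBounded D)
    (p : EuclideanSpace ℂ (Fin n)) (hp : p ∈ D)
    (ξ : EuclideanSpace ℂ (Fin n)) (hξ : ξ ≠ 0)
    (r : ℝ)
    (hrdef : r = sSup {ρ : ℝ | 0 < ρ ∧
      ∀ z : ℂ, ‖z‖ < ρ → p + (z / (‖ξ‖ : ℂ)) • ξ ∈ D}) :
    ‖ξ‖ / (2 * r) ≤ kobayashiMetric D p ξ ∧ kobayashiMetric D p ξ ≤ ‖ξ‖ / r := by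
  set S : Set ℝ := {ρ : ℝ | 0 < ρ ∧
      ∀ z : ℂ, ‖z‖ < ρ → p + (z / (‖ξ‖ : ℂ)) • ξ ∈ D} with hSdef
  set T : Set ℝ := { c : ℝ | 0 < c ∧ ∃ f : ℂ → EuclideanSpace ℂ (Fin n),
    DifferentiableOn ℂ f (Metric.ball (0:ℂ) 1) ∧
    Set.MapsTo f (Metric.ball (0:ℂ) 1) D ∧ f 0 = p ∧ deriv f 0 = c⁻¹ • ξ } with hTdef
  have hκ : kobayashiMetric D p ξ = sInf T := rfl
  have hξ0 : (0:ℝ) < ‖ξ‖ := norm_pos_iff.mpr hξ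
  have hnormmap : ∀ z : ℂ, ‖(z / (‖ξ‖:ℂ)) • ξ‖ = ‖z‖ := by
    intro z
    rw [norm_smul]
    simp only [norm_div, Complex.norm_real, Real.norm_eq_abs, abs_of_pos hξ0]
    field_simp
  have hSne : S.Nonempty := by
    obtain ⟨ε, hε, hball⟩ := Metric.isOpen_iff.mp hopen p hp
    refine ⟨ε, hε, fun z hz => hball ?_⟩
    rw [mem_ball, dist_eq_norm, add_sub_cancel_left, hnormmap]
    exact hz
  have hSbdd : BddAbove S := by
    obtain ⟨R, hR⟩ := hbd.subset_closedBall p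
    have hR0 : 0 ≤ R := by
      have := hR hp
      simpa using this
    refine ⟨R + 1, fun ρ hρ => ?_⟩
    by_contra hcon
    push_neg at hcon
    have hz : ‖((R + 1 : ℝ) : ℂ)‖ < ρ := by
      rw [Complex.norm_real, Real.norm_eq_abs, abs_of_nonneg (by linarith)]
      exact hcon
    have hmem := hρ.2 _ hz
    have := hR hmem
    rw [mem_closedBall, dist_eq_norm, add_sub_cancel_left, hnormmap,
      Complex.norm_real, Real.norm_eq_abs, abs_of_nonneg (by linarith)] at this
    linarith
  have hrpos : 0 < r := by
    obtain ⟨ε, hε⟩ := hSne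
    have := le_csSup hSbdd hε
    rw [← hrdef] at this
    linarith [hε.1]
  have hrS : r ∈ S := by
    refine ⟨hrpos, fun z hz => ?_⟩
    obtain ⟨ρ, hρS, hzρ⟩ := exists_lt_of_lt_csSup hSne (hrdef ▸ hz)
    exact hρS.2 z hzρ
  have hTbdd : BddBelow T := ⟨0, fun c hc => le_of_lt hc.1⟩
  -- the extremal disk gives membership of ‖ξ‖ / r in T
  have hTmem : ‖ξ‖ / r ∈ T := by
    refine ⟨div_pos hξ0 hrpos, fun z => p + (((r:ℂ) * z) / (‖ξ‖:ℂ)) • ξ, ?_, ?_, by simp, ?_⟩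
    · apply Differentiable.differentiableOn
      apply Differentiable.const_add
      apply Differentiable.smul_const
      exact (differentiable_id.const_mul _).div_const _
    · intro z hz
      apply hrS.2
      rw [norm_mul, Complex.norm_real, Real.norm_eq_abs, abs_of_pos hrpos]
      calc r * ‖z‖ < r * 1 := by
            apply mul_lt_mul_of_pos_left _ hrpos
            simpa [mem_ball, dist_zero_right] using hz
        _ = r := mul_one r
    · have hder : HasDerivAt (fun z : ℂ => p + (((r:ℂ) * z) / (‖ξ‖:ℂ)) • ξ)
          (((r:ℂ) / (‖ξ‖:ℂ)) • ξ) 0 := by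
        have h1 : ∀ z : ℂ, (((r:ℂ) * z) / (‖ξ‖:ℂ)) • ξ = z • (((r:ℂ) / (‖ξ‖:ℂ)) • ξ) := by
          intro z
          rw [smul_smul]
          congr 1
          ring
        have h2 : HasDerivAt (fun z : ℂ => z • (((r:ℂ) / (‖ξ‖:ℂ)) • ξ))
            ((1:ℂ) • (((r:ℂ) / (‖ξ‖:ℂ)) • ξ)) 0 := (hasDerivAt_id (0:ℂ)).smul_const _
        rw [one_smul] at h2
        simp only [h1]
        exact h2.const_add p
      rw [hder.deriv]
      have : (‖ξ‖ / r)⁻¹ • ξ = (((r / ‖ξ‖ : ℝ)) : ℂ) • ξ := by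
        rw [Complex.coe_smul]
        congr 1
        rw [inv_div]
      rw [this]
      push_cast
      rfl
  have hupper : kobayashiMetric D p ξ ≤ ‖ξ‖ / r := csInf_le hTbdd hTmem
  refine ⟨?_, hupper⟩
  -- Lower bound
  rw [hκ]
  apply le_csInf ⟨_, hTmem⟩
  rintro c ⟨hc0, f, hfd, hfm, hf0, hf'⟩
  -- find a boundary point q = p + (z₀/‖ξ‖)•ξ with |z₀| ≤ r and q ∉ D
  have hexz : ∀ k : ℕ, ∃ z : ℂ, ‖z‖ < r + 1/(k+1) ∧ p + (z / (‖ξ‖:ℂ)) • ξ ∉ D := by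
    intro k
    have hk : (0:ℝ) < 1/(k+1) := by positivity
    have hnot : r + 1/(k+1) ∉ S := by
      intro hmem
      have := le_csSup hSbdd hmem
      rw [← hrdef] at this
      linarith
    rw [hSdef, mem_setOf_eq] at hnot
    push_neg at hnot
    exact hnot (by linarith)
  choose zseq hz1 hz2 using hexz
  have hmemseq : ∀ k, zseq k ∈ closedBall (0:ℂ) (r + 1) := by
    intro k
    rw [mem_closedBall, dist_zero_right]
    have h1 : (1:ℝ)/(k+1) ≤ 1 := by
      rw [div_le_one (by positivity)]
      simp
    linarith [hz1 k]
  obtain ⟨z₀, hz₀mem, φ, hφ, htend⟩ :=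
    (isCompact_closedBall (0:ℂ) (r+1)).tendsto_subseq hmemseq
  have habs_tend : Filter.Tendsto (fun k => ‖zseq (φ k)‖) Filter.atTop
      (nhds ‖z₀‖) := (continuous_norm.continuousAt.tendsto).comp htend
  have hbound_tend : Filter.Tendsto (fun k : ℕ => r + 1/((φ k : ℝ)+1)) Filter.atTop (nhds r) := by
    have h1 : Filter.Tendsto (fun k : ℕ => (1:ℝ)/((φ k : ℝ)+1)) Filter.atTop (nhds 0) :=
      tendsto_one_div_add_atTop_nhds_zero_nat.comp hφ.tendsto_atTop
    simpa using tendsto_const_nhds.add h1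
  have hz₀le : ‖z₀‖ ≤ r :=
    le_of_tendsto_of_tendsto' habs_tend hbound_tend (fun k => (hz1 (φ k)).le)
  set q : EuclideanSpace ℂ (Fin n) := p + (z₀ / (‖ξ‖:ℂ)) • ξ with hqdef
  have hqD : q ∉ D := by
    have hG : Continuous (fun z : ℂ => p + (z / (‖ξ‖:ℂ)) • ξ) :=
      continuous_const.add ((continuous_id.div_const _).smul continuous_const)
    have htendq : Filter.Tendsto (fun k => p + (zseq (φ k) / (‖ξ‖:ℂ)) • ξ) Filter.atTop
        (nhds q) := (hG.continuousAt.tendsto).comp htend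
    exact hopen.isClosed_compl.mem_of_tendsto htendq
      (Filter.Eventually.of_forall fun k => hz2 (φ k))
  -- separating functional
  obtain ⟨ℓ, hℓ⟩ := geometric_hahn_banach_open_point hconv hopen hqD
  set Λ : EuclideanSpace ℂ (Fin n) →L[ℂ] ℂ := StrongDual.extendRCLike ℓ with hΛdef
  have hre : ∀ x, (Λ x).re = ℓ x := by
    intro x
    rw [hΛdef, StrongDual.extendRCLike_apply]
    simp [Complex.sub_re, Complex.mul_re]
  set t : ℝ := ℓ q with htdef
  set g : ℂ → ℂ := fun w => Λ (f w) with hgdef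
  have hgd : DifferentiableOn ℂ g (ball (0:ℂ) 1) :=
    Λ.differentiable.comp_differentiableOn hfd
  have hgm : ∀ z ∈ ball (0:ℂ) 1, (g z).re < t := by
    intro z hz
    rw [hgdef]
    simp only
    rw [hre]
    exact hℓ _ (hfm hz)
  have hmain := halfplane_schwarz g t hgd hgm
  have hg0 : (g 0).re = ℓ p := by rw [hgdef]; simp only; rw [hf0, hre]
  -- compute deriv g 0
  have hfa : DifferentiableAt ℂ f 0 :=
    hfd.differentiableAt (isOpen_ball.mem_nhds (by simp))
  have hgder : HasDerivAt g (Λ (deriv f 0)) 0 :=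
    Λ.hasFDerivAt.comp_hasDerivAt 0 hfa.hasDerivAt
  rw [hgder.deriv, hf'] at hmain
  have hmapsmul : Λ (c⁻¹ • ξ) = c⁻¹ • Λ ξ := Λ.map_smul_of_tower c⁻¹ ξ
  rw [hmapsmul] at hmain
  set A : ℝ := ‖Λ ξ‖ with hAdef
  have habs_smul : ‖c⁻¹ • Λ ξ‖ = c⁻¹ * A := by
    rw [Complex.real_smul, norm_mul, Complex.norm_real, Real.norm_eq_abs, abs_of_pos (by positivity)]
  rw [habs_smul, hg0] at hmain
  -- estimate t - ℓ p from above
  have hq_sub : q - p = (z₀ / (‖ξ‖:ℂ)) • ξ := by rw [hqdef]; exact add_sub_cancel_left p _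
  have hΛqp : Λ q - Λ p = (z₀ / (‖ξ‖:ℂ)) * Λ ξ := by
    rw [← map_sub, hq_sub, map_smul, smul_eq_mul]
  have ht_est : t - ℓ p ≤ r / ‖ξ‖ * A := by
    have h1 : t - ℓ p = (Λ q - Λ p).re := by
      rw [Complex.sub_re, hre, hre, htdef]
    rw [h1, hΛqp]
    calc ((z₀ / (‖ξ‖:ℂ)) * Λ ξ).re ≤ ‖(z₀ / (‖ξ‖:ℂ)) * Λ ξ‖ := Complex.re_le_norm _
      _ = ‖z₀‖ / ‖ξ‖ * A := by
          rw [norm_mul, norm_div, Complex.norm_real, Real.norm_eq_abs, abs_of_pos hξ0]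
      _ ≤ r / ‖ξ‖ * A := by
          apply mul_le_mul_of_nonneg_right _ (norm_nonneg _)
          exact div_le_div_of_nonneg_right hz₀le hξ0.le
  have htpos : 0 < t - ℓ p := by
    have := hℓ p hp
    rw [htdef]
    linarith
  have hApos : 0 < A := by
    rcases (norm_nonneg (Λ ξ)).lt_or_eq with h | h
    · exact h
    · exfalso
      rw [hAdef, ← h, mul_zero] at ht_est
      linarith
  -- combine
  have hchain : c⁻¹ * A ≤ 2 * (r / ‖ξ‖) * A := by
    calc c⁻¹ * A ≤ 2 * (t - ℓ p) := hmain
      _ ≤ 2 * (r / ‖ξ‖ * A) := by linarith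
      _ = 2 * (r / ‖ξ‖) * A := by ring
  have hcinv : c⁻¹ ≤ 2 * (r / ‖ξ‖) := le_of_mul_le_mul_right hchain hApos
  have h1 : (1:ℝ) ≤ c * (2 * (r / ‖ξ‖)) := by
    calc (1:ℝ) = c * c⁻¹ := (mul_inv_cancel₀ hc0.ne').symm
      _ ≤ c * (2 * (r / ‖ξ‖)) := mul_le_mul_of_nonneg_left hcinv hc0.le
  rw [div_le_iff₀ (by positivity)]
  have h2 : c * (2 * (r / ‖ξ‖)) = c * (2 * r) / ‖ξ‖ := by ring
  rw [h2, le_div_iff₀ hξ0, one_mul] at h1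
  linarith
end
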